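/- arXiv:1910.03627 — 9 statements merged into one kernel-verified Lean document; each statement's English description precedes it below -/
import Mathlib

section
/- Let α ∈ (0,1) and c > 0, and assume H₀ is nonempty. Then P( for every k ∈ {1,…,p}: wFDP(R_k) ≤ (−log α) · (1 + c·#{j ≤ k : κ_j > 1}) / max(C(R_k), 1) · max_{m ∈ H₀} [ ω_m / log(ω_m − (ω_m − 1)·α^c) ] ) ≥ 1 − α. -/
/-!
Bet on every null `j` the factor `exp (l ω_j)` if `κ_j = 1` and `b = α ^ c` otherwise. Its mean
`(exp (l ω_j) + (ω_j - 1) b) / ω_j` is at most `1` exactly when `l ω_j ≤ log (ω_j - (ω_j - 1) b)`,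
and `l = 1 / max_{m ∈ H₀} [ω_m / log (ω_m - (ω_m - 1) b)]` is the largest bet for which this holds
for every null. The running product over the nulls `j ≤ k` is then a nonnegative supermartingale
started at `1`, equal to `exp (l C(R_k ∩ H₀)) · b ^ #{j ≤ k null : κ_j > 1}`. By Ville's inequality
(optional stopping at the first passage above `1 / α`, then Markov's inequality) it stays below
`1 / α` for all `k` at once with probability at least `1 - α`, and the logarithm of that bound,
after bounding the null count by `#{j ≤ k : κ_j > 1}`, is the claimed inequality.
-/

open MeasureTheory ProbabilityTheory Finset

namespace Ville

def StaysBelow (t : ℝ) (x : ℕ → ℝ) (n : ℕ) : Prop :=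
  ∀ m ≤ n, ∏ i ∈ range m, x i < t

open scoped Classical in
noncomputable def stoppedProd (t : ℝ) (x : ℕ → ℝ) (n : ℕ) : ℝ :=
  ∏ i ∈ range n, if StaysBelow t x i then x i else 1

open scoped Classical in
noncomputable def liveProd (t : ℝ) (x : ℕ → ℝ) (n : ℕ) : ℝ :=
  if StaysBelow t x n then stoppedProd t x n else 0

variable {t : ℝ} {x y : ℕ → ℝ} {n : ℕ}

open scoped Classical in
theorem stoppedProd_succ (t : ℝ) (x : ℕ → ℝ) (n : ℕ) :
    stoppedProd t x (n + 1) = stoppedProd t x n + liveProd t x n * (x n - 1) := by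
  rw [stoppedProd, prod_range_succ, ← stoppedProd, liveProd]
  split_ifs <;> ring

theorem stoppedProd_nonneg (hx : ∀ i, 0 ≤ x i) (n : ℕ) : 0 ≤ stoppedProd t x n :=
  prod_nonneg fun i _ => by split_ifs <;> simp [hx i]

theorem liveProd_nonneg (hx : ∀ i, 0 ≤ x i) (n : ℕ) : 0 ≤ liveProd t x n := by
  unfold liveProd; split_ifs <;> simp [stoppedProd_nonneg hx n]

theorem liveProd_le_stoppedProd (hx : ∀ i, 0 ≤ x i) (n : ℕ) :
    liveProd t x n ≤ stoppedProd t x n := by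
  unfold liveProd; split_ifs <;> simp [stoppedProd_nonneg hx n]

theorem staysBelow_congr (h : ∀ i < n, x i = y i) : StaysBelow t x n ↔ StaysBelow t y n := by
  refine forall₂_congr fun m hm => ?_
  rw [prod_congr rfl fun i hi => h i ((mem_range.1 hi).trans_le hm)]

theorem stoppedProd_congr (h : ∀ i < n, x i = y i) : stoppedProd t x n = stoppedProd t y n :=
  prod_congr rfl fun i hi => by
    have hi := mem_range.1 hi
    rw [h i hi, staysBelow_congr fun j hj => h j (hj.trans hi)]

open scoped Classical in
theorem liveProd_congr (h : ∀ i < n, x i = y i) : liveProd t x n = liveProd t y n := by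
  unfold liveProd
  exact if_congr (staysBelow_congr h) (stoppedProd_congr h) rfl

/-- Until the running product first reaches `t` every factor is kept, afterwards none is, so the
stopped product freezes at the first value `≥ t`. -/
theorem le_stoppedProd (h : ∃ m ≤ n, t ≤ ∏ i ∈ range m, x i) : t ≤ stoppedProd t x n := by
  classical
  have hhit : ∃ m, t ≤ ∏ i ∈ range m, x i := let ⟨m, _, hm⟩ := h; ⟨m, hm⟩
  set τ := Nat.find hhit
  have hτn : τ ≤ n := let ⟨m, hmn, hm⟩ := h; (Nat.find_min' hhit hm).trans hmn
  have hbelow : ∀ i, StaysBelow t x i ↔ i < τ := fun i =>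
    ⟨fun hi => lt_of_not_ge fun hτi => (hi τ hτi).not_ge (Nat.find_spec hhit),
      fun hi m hm => lt_of_not_ge fun hm' => (Nat.find_min hhit (hm.trans_lt hi)) hm'⟩
  rw [stoppedProd, ← prod_range_mul_prod_Ico _ hτn,
    prod_congr rfl fun i hi => if_pos ((hbelow i).2 (mem_range.1 hi)),
    prod_congr rfl fun i hi => if_neg (mt (hbelow i).1 (mem_Ico.1 hi).1.not_gt), prod_const_one,
    mul_one]
  exact Nat.find_spec hhit

theorem measurableSet_staysBelow (t : ℝ) (n : ℕ) :
    MeasurableSet {x : ℕ → ℝ | StaysBelow t x n} := by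
  simp only [StaysBelow, Set.ofPred_forall]
  exact MeasurableSet.iInter fun m => MeasurableSet.iInter fun _ =>
    measurableSet_lt (by fun_prop) measurable_const

theorem measurable_stoppedProd (t : ℝ) (n : ℕ) :
    Measurable fun x : ℕ → ℝ => stoppedProd t x n := by
  classical
  exact Finset.measurable_prod _ fun i _ =>
    Measurable.ite (measurableSet_staysBelow t i) (measurable_pi_apply i) measurable_const

theorem measurable_liveProd (t : ℝ) (n : ℕ) : Measurable fun x : ℕ → ℝ => liveProd t x n := by
  classical
  exact Measurable.ite (measurableSet_staysBelow t n) (measurable_stoppedProd t n) measurable_const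

variable {Ω : Type*} [MeasurableSpace Ω] {μ : Measure Ω} {X : ℕ → Ω → ℝ}

-- `liveProd` at time `n` depends only on the first `n` factors.
theorem indepFun_liveProd (hindep : IndepFun (fun ω (i : Fin n) => X i ω) (X n) μ) (t : ℝ) :
    IndepFun (fun ω => liveProd t (X · ω) n) (X n) μ := by
  have hcomp := hindep.comp (φ := fun v : Fin n → ℝ =>
      liveProd t (fun i => if h : i < n then v ⟨i, h⟩ else 0) n)
    ((measurable_liveProd t n).comp (measurable_pi_lambda _ fun i => by split_ifs <;> fun_prop))
    measurable_id
  convert hcomp using 1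
  · funext ω
    exact liveProd_congr fun i hi => by simp [hi]
  · rfl

variable [IsProbabilityMeasure μ]

theorem integrable_stoppedProd_and_integral_le_one (hmeas : ∀ n, Measurable (X n))
    (hnonneg : ∀ n ω, 0 ≤ X n ω) (hint : ∀ n, Integrable (X n) μ) (hmean : ∀ n, ∫ ω, X n ω ∂μ ≤ 1)
    (hindep : ∀ n, IndepFun (fun ω (i : Fin n) => X i ω) (X n) μ) (t : ℝ) (n : ℕ) :
    Integrable (fun ω => stoppedProd t (X · ω) n) μ ∧ ∫ ω, stoppedProd t (X · ω) n ∂μ ≤ 1 := by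
  induction n with
  | zero => simp [stoppedProd]
  | succ n ih =>
    obtain ⟨hGint, hGle⟩ := ih
    set L := fun ω => liveProd t (X · ω) n
    have hLmeas : Measurable L := (measurable_liveProd t n).comp (measurable_pi_lambda _ hmeas)
    have hL0 : ∀ ω, 0 ≤ L ω := fun ω => liveProd_nonneg (hnonneg · ω) n
    have hLint : Integrable L μ :=
      hGint.mono' hLmeas.aestronglyMeasurable (ae_of_all _ fun ω => by
        rw [Real.norm_of_nonneg (hL0 ω)]
        exact liveProd_le_stoppedProd (hnonneg · ω) n)
    have hLX := indepFun_liveProd (hindep n) t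
    have hLXint : Integrable (L * X n) μ := hLX.integrable_mul hLint (hint n)
    have hincr : Integrable (fun ω => L ω * (X n ω - 1)) μ := by
      simp_rw [mul_sub_one]; exact hLXint.sub hLint
    have hstep : ∫ ω, L ω * (X n ω - 1) ∂μ ≤ 0 := calc
      ∫ ω, L ω * (X n ω - 1) ∂μ = ∫ ω, (L * X n) ω - L ω ∂μ := by simp [mul_sub_one]
      _ = (∫ ω, L ω ∂μ) * (∫ ω, X n ω ∂μ) - ∫ ω, L ω ∂μ := by
        rw [integral_sub hLXint hLint, hLX.integral_mul_eq_mul_integral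
          hLmeas.aestronglyMeasurable (hmeas n).aestronglyMeasurable]
      _ ≤ 0 := by
        have hLpos : 0 ≤ ∫ ω, L ω ∂μ := integral_nonneg hL0
        nlinarith [hmean n]
    simp_rw [stoppedProd_succ]
    exact ⟨hGint.add hincr, by rw [integral_add hGint hincr]; linarith⟩

theorem measure_exists_le_prod_le (hmeas : ∀ n, Measurable (X n)) (hnonneg : ∀ n ω, 0 ≤ X n ω)
    (hint : ∀ n, Integrable (X n) μ) (hmean : ∀ n, ∫ ω, X n ω ∂μ ≤ 1)
    (hindep : ∀ n, IndepFun (fun ω (i : Fin n) => X i ω) (X n) μ) {t : ℝ} (ht : 0 < t) (N : ℕ) :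
    μ {ω | ∃ n ≤ N, t ≤ ∏ i ∈ range n, X i ω} ≤ ENNReal.ofReal (1 / t) := by
  obtain ⟨hGint, hGle⟩ :=
    integrable_stoppedProd_and_integral_le_one hmeas hnonneg hint hmean hindep t N
  have hmarkov := mul_meas_ge_le_integral_of_nonneg
    (ae_of_all _ fun ω => stoppedProd_nonneg (hnonneg · ω) N) hGint t
  calc μ {ω | ∃ n ≤ N, t ≤ ∏ i ∈ range n, X i ω}
      ≤ μ {ω | t ≤ stoppedProd t (X · ω) N} := measure_mono fun ω => le_stoppedProd
    _ = ENNReal.ofReal (μ.real {ω | t ≤ stoppedProd t (X · ω) N}) :=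
      (ofReal_measureReal (measure_ne_top _ _)).symm
    _ ≤ ENNReal.ofReal (1 / t) := ENNReal.ofReal_le_ofReal (by rw [le_div_iff₀ ht]; linarith)

end Ville

theorem integral_ite_const {Ω : Type*} [MeasurableSpace Ω] {μ : Measure Ω} [IsProbabilityMeasure μ]
    {P : Ω → Prop} [DecidablePred P] (hP : MeasurableSet {ω | P ω}) (a b : ℝ) :
    ∫ ω, (if P ω then a else b) ∂μ = μ.real {ω | P ω} * a + (1 - μ.real {ω | P ω}) * b := by
  change ∫ ω, {ω | P ω}.piecewise (fun _ => a) (fun _ => b) ω ∂μ = _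
  rw [integral_piecewise hP (integrable_const a).integrableOn (integrable_const b).integrableOn,
    setIntegral_const, setIntegral_const, probReal_compl_eq_one_sub hP, smul_eq_mul, smul_eq_mul]

theorem ofReal_one_sub_le_measure_of_measure_compl_le {Ω : Type*} [MeasurableSpace Ω]
    {μ : Measure Ω} [IsProbabilityMeasure μ] {s : Set Ω} {α : ℝ} (hα : 0 ≤ α)
    (h : μ sᶜ ≤ ENNReal.ofReal α) : ENNReal.ofReal (1 - α) ≤ μ s := by
  rw [ENNReal.ofReal_sub _ hα, ENNReal.ofReal_one, tsub_le_iff_right]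
  calc 1 = μ Set.univ := measure_univ.symm
    _ ≤ μ s + μ sᶜ := measure_univ_le_add_compl s
    _ ≤ μ s + ENNReal.ofReal α := by gcongr

theorem Real.exp_inv_mul_le_of_div_log_le {x y M : ℝ} (hy : 1 < y) (hM : 0 < M)
    (h : x / Real.log y ≤ M) : Real.exp (M⁻¹ * x) ≤ y := by
  have hlog := Real.log_pos hy
  rw [← Real.le_log_iff_exp_le (by linarith), inv_mul_le_iff₀ hM]
  rwa [div_le_iff₀ hlog] at h

theorem div_le_of_exp_mul_rpow_pow_lt {α c M C D : ℝ} {m N : ℕ} (hα0 : 0 < α) (hα1 : α ≤ 1)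
    (hc : 0 ≤ c) (hM : 0 < M) (hD : 0 < D) (hmN : m ≤ N)
    (h : Real.exp (M⁻¹ * C) * (α ^ c) ^ m < 1 / α) :
    C / D ≤ -Real.log α * ((1 + c * N) / D) * M := by
  have hexp : Real.exp (M⁻¹ * C + N * (Real.log α * c)) < Real.exp (-Real.log α) := calc
    Real.exp (M⁻¹ * C + N * (Real.log α * c)) = Real.exp (M⁻¹ * C) * (α ^ c) ^ N := by
      rw [Real.exp_add, Real.exp_nat_mul, Real.rpow_def_of_pos hα0]
    _ ≤ Real.exp (M⁻¹ * C) * (α ^ c) ^ m := by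
      refine mul_le_mul_of_nonneg_left ?_ (Real.exp_pos _).le
      exact pow_le_pow_of_le_one (Real.rpow_nonneg hα0.le c) (Real.rpow_le_one hα0.le hα1 hc) hmN
    _ < 1 / α := h
    _ = Real.exp (-Real.log α) := by rw [Real.exp_neg, Real.exp_log hα0, one_div]
  have hC : C < M * (-Real.log α * (1 + c * N)) := by
    rw [← inv_mul_lt_iff₀ hM]
    linarith [Real.exp_lt_exp.1 hexp]
  calc C / D ≤ M * (-Real.log α * (1 + c * N)) / D := by gcongr
    _ = -Real.log α * ((1 + c * N) / D) * M := by ring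

theorem one_lt_sub_sub_one_mul {x b : ℝ} (hx : 1 < x) (hb : b < 1) : 1 < x - (x - 1) * b := by
  nlinarith

section CheapKnockoffs

variable {p : ℕ} (w : Fin p → ℕ) (H0 : Finset (Fin p)) (l b : ℝ)

noncomputable def nullFactor (j : Fin p) (k : ℕ) : ℝ :=
  if j ∈ H0 then (if k = 1 then Real.exp (l * w j) else b) else 1

-- The neutral factor `1` at indices `n ≥ p` lets the `ℕ`-indexed Ville bound apply.
noncomputable def factorSeq {Ω : Type*} (κ : Fin p → Ω → ℕ) (n : ℕ) (ω : Ω) : ℝ :=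
  if h : n < p then nullFactor w H0 l b ⟨n, h⟩ (κ ⟨n, h⟩ ω) else 1

noncomputable def betScale (hH0 : H0.Nonempty) : ℝ :=
  H0.sup' hH0 fun m => (w m : ℝ) / Real.log (w m - (w m - 1) * b)

variable {w H0 l b}

theorem betScale_pos (hw : ∀ j, 1 < w j) (hH0 : H0.Nonempty) (hb : b < 1) :
    0 < betScale w H0 b hH0 := by
  obtain ⟨m, hm⟩ := hH0
  have hwm : (1 : ℝ) < w m := Nat.one_lt_cast.2 (hw m)
  exact (div_pos (by linarith) (Real.log_pos (one_lt_sub_sub_one_mul hwm hb))).trans_le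
    (le_sup' (fun m => (w m : ℝ) / Real.log (w m - (w m - 1) * b)) hm)

theorem exp_inv_betScale_mul_le (hw : ∀ j, 1 < w j) (hH0 : H0.Nonempty) (hb : b < 1) {j : Fin p}
    (hj : j ∈ H0) : Real.exp ((betScale w H0 b hH0)⁻¹ * w j) ≤ w j - (w j - 1) * b :=
  Real.exp_inv_mul_le_of_div_log_le (one_lt_sub_sub_one_mul (Nat.one_lt_cast.2 (hw j)) hb)
    (betScale_pos hw hH0 hb)
    (le_sup' (fun m => (w m : ℝ) / Real.log (w m - (w m - 1) * b)) hj)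

theorem prod_range_factorSeq {Ω : Type*} (κ : Fin p → Ω → ℕ) (ω : Ω) (k : Fin p) :
    ∏ i ∈ range (k + 1), factorSeq w H0 l b κ i ω = ∏ j ∈ Iic k, nullFactor w H0 l b j (κ j ω) := by
  rw [Nat.range_succ_eq_Iic, ← Fin.map_valEmbedding_Iic, prod_map]
  exact prod_congr rfl fun j _ => by simp [factorSeq]

theorem prod_Iic_nullFactor (v : Fin p → ℕ) (k : Fin p) :
    ∏ j ∈ Iic k, nullFactor w H0 l b j (v j) =
      Real.exp (l * ∑ j ∈ univ.filter (fun j => j ≤ k ∧ v j = 1 ∧ j ∈ H0), (w j : ℝ)) *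
        b ^ (univ.filter (fun j => j ≤ k ∧ v j ≠ 1 ∧ j ∈ H0)).card := by
  simp only [nullFactor]
  rw [prod_ite, prod_const_one, mul_one, prod_ite, prod_const, ← Real.exp_sum, mul_sum,
    filter_filter, filter_filter, ← filter_ge_eq_Iic, filter_filter, filter_filter]
  congr 3 <;> ext j <;> simp only [mem_filter, mem_univ, true_and] <;> tauto

theorem nullFactor_nonneg (hb : 0 ≤ b) (j : Fin p) (k : ℕ) : 0 ≤ nullFactor w H0 l b j k := by
  unfold nullFactor; split_ifs <;> positivity

theorem nullFactor_le (hb : b ≤ 1) (j : Fin p) (k : ℕ) :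
    nullFactor w H0 l b j k ≤ max (Real.exp (l * w j)) 1 := by
  unfold nullFactor; split_ifs <;> simp [hb]

variable {Ω : Type*} [MeasurableSpace Ω] {μ : Measure Ω} [IsProbabilityMeasure μ]
  {κ : Fin p → Ω → ℕ}

theorem measurable_factorSeq (hκ : ∀ j, Measurable (κ j)) (n : ℕ) :
    Measurable (factorSeq w H0 l b κ n) := by
  unfold factorSeq
  split_ifs
  exacts [(measurable_of_countable (nullFactor w H0 l b _)).comp (hκ _), measurable_const]

theorem integrable_factorSeq (hκ : ∀ j, Measurable (κ j)) (hb0 : 0 ≤ b) (hb1 : b ≤ 1) (n : ℕ) :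
    Integrable (factorSeq w H0 l b κ n) μ := by
  unfold factorSeq
  split_ifs with h
  · refine Integrable.of_bound ((measurable_of_countable (nullFactor w H0 l b _)).comp
      (hκ _)).aestronglyMeasurable (max (Real.exp (l * w ⟨n, h⟩)) 1) (ae_of_all _ fun ω => ?_)
    rw [Real.norm_of_nonneg (nullFactor_nonneg hb0 _ _)]
    exact nullFactor_le hb1 _ _
  · exact integrable_const 1

theorem integral_nullFactor_le_one {j : Fin p} (hj : j ∈ H0) (hκ : Measurable (κ j))
    (hw : 0 < w j) (hunif : μ {ω | κ j ω = 1} = ENNReal.ofReal (1 / (w j : ℝ)))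
    (hbet : Real.exp (l * w j) ≤ w j - (w j - 1) * b) :
    ∫ ω, nullFactor w H0 l b j (κ j ω) ∂μ ≤ 1 := by
  have hw' : (0 : ℝ) < w j := by exact_mod_cast hw
  simp only [nullFactor, if_pos hj]
  rw [integral_ite_const (P := fun ω => κ j ω = 1) (hκ (measurableSet_singleton 1)),
    measureReal_def, hunif, ENNReal.toReal_ofReal (by positivity), ← sub_nonneg]
  have : 1 - (1 / (w j : ℝ) * Real.exp (l * w j) + (1 - 1 / w j) * b) =
      (w j - (w j - 1) * b - Real.exp (l * w j)) / w j := by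
    field_simp
    ring
  rw [this]
  exact div_nonneg (by linarith) hw'.le

theorem indepFun_prefix_factorSeq (hκ : ∀ j, Measurable (κ j))
    (hindep : iIndepFun (fun j : H0 => κ j) μ) (n : ℕ) :
    IndepFun (fun ω (i : Fin n) => factorSeq w H0 l b κ i ω) (factorSeq w H0 l b κ n) μ := by
  by_cases hnull : ∃ h : n < p, (⟨n, h⟩ : Fin p) ∈ H0
  · obtain ⟨hn, hj⟩ := hnull
    let S : Finset H0 := univ.filter fun i => (i : Fin p).val < n
    let T : Finset H0 := {⟨⟨n, hn⟩, hj⟩}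
    have hST : Disjoint S T := by simp [S, T]
    let φ : (S → ℕ) → Fin n → ℝ := fun u i =>
      if hi : (⟨i, i.2.trans hn⟩ : Fin p) ∈ H0 then
        nullFactor w H0 l b ⟨i, i.2.trans hn⟩ (u ⟨⟨_, hi⟩, by simp [S]⟩)
      else 1
    let ψ : (T → ℕ) → ℝ := fun u => nullFactor w H0 l b ⟨n, hn⟩ (u ⟨_, mem_singleton_self _⟩)
    convert (hindep.indepFun_finset S T hST fun i => hκ i).comp
      (measurable_of_countable φ) (measurable_of_countable ψ) using 1
    · funext ω i
      simp only [Function.comp_apply, φ, factorSeq, dif_pos (i.2.trans hn)]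
      split_ifs with hi
      · rfl
      · simp [nullFactor, hi]
    · funext ω
      simp [ψ, factorSeq, hn]
  · have hconst : factorSeq w H0 l b κ n = fun _ => 1 := by
      funext ω
      unfold factorSeq
      split_ifs with hn
      · rw [nullFactor, if_neg fun hj => hnull ⟨hn, hj⟩]
      · rfl
    rw [hconst]
    exact indepFun_const_right _ 1

theorem measure_exists_le_prod_factorSeq_le (hκ : ∀ j, Measurable (κ j))
    (hindep : iIndepFun (fun j : H0 => κ j) μ) (hw : ∀ j, 0 < w j)
    (hunif : ∀ j ∈ H0, μ {ω | κ j ω = 1} = ENNReal.ofReal (1 / (w j : ℝ)))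
    (hb0 : 0 ≤ b) (hb1 : b ≤ 1) (hbet : ∀ j ∈ H0, Real.exp (l * w j) ≤ w j - (w j - 1) * b)
    {t : ℝ} (ht : 0 < t) :
    μ {ω | ∃ n ≤ p, t ≤ ∏ i ∈ range n, factorSeq w H0 l b κ i ω} ≤ ENNReal.ofReal (1 / t) := by
  refine Ville.measure_exists_le_prod_le (measurable_factorSeq hκ)
    (fun n ω => ?_) (integrable_factorSeq hκ hb0 hb1) (fun n => ?_)
    (indepFun_prefix_factorSeq hκ hindep) ht p
  · unfold factorSeq
    split_ifs
    exacts [nullFactor_nonneg hb0 _ _, zero_le_one]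
  · unfold factorSeq
    split_ifs with hn
    · by_cases hj : (⟨n, hn⟩ : Fin p) ∈ H0
      · exact integral_nullFactor_le_one hj (hκ _) (hw _) (hunif _ hj) (hbet _ hj)
      · simp [nullFactor, hj]
    · simp

end CheapKnockoffs

theorem cheap_knockoffs_simultaneous_wFDP_control_general
    {Ω : Type*} [MeasurableSpace Ω] (μ : Measure Ω) [IsProbabilityMeasure μ]
    (p : ℕ) (w : Fin p → ℕ) (hw : ∀ j, 2 ≤ w j)
    (H0 : Finset (Fin p)) (hH0 : H0.Nonempty)
    (κ : Fin p → Ω → ℕ)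
    (hκmeas : ∀ j, Measurable (κ j))
    (hrange : ∀ j ω₀, κ j ω₀ ∈ Finset.Icc 1 (w j))
    (hindep : iIndepFun (m := fun _ : H0 => (inferInstance : MeasurableSpace ℕ))
      (fun j : H0 => κ j) μ)
    (hunif : ∀ j ∈ H0, ∀ i ∈ Finset.Icc 1 (w j),
      μ {ω₀ | κ j ω₀ = i} = ENNReal.ofReal (1 / (w j : ℝ)))
    (α c : ℝ) (hα : α ∈ Set.Ioo (0 : ℝ) 1) (hc : 0 < c) :
    ENNReal.ofReal (1 - α) ≤
      μ {ω₀ | ∀ k : Fin p,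
        (∑ j ∈ Finset.univ.filter (fun j => j ≤ k ∧ κ j ω₀ = 1 ∧ j ∈ H0), (w j : ℝ)) /
            max (∑ j ∈ Finset.univ.filter (fun j => j ≤ k ∧ κ j ω₀ = 1), (w j : ℝ)) 1 ≤
          (- Real.log α) *
            ((1 + c * (Finset.univ.filter (fun j => j ≤ k ∧ 1 < κ j ω₀)).card) /
              max (∑ j ∈ Finset.univ.filter (fun j => j ≤ k ∧ κ j ω₀ = 1), (w j : ℝ)) 1) *
            (H0.sup' hH0 (fun m =>
              (w m : ℝ) / Real.log ((w m : ℝ) - ((w m : ℝ) - 1) * α ^ c)))} := by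
  obtain ⟨hα0, hα1⟩ := hα
  have hb1 : α ^ c < 1 := Real.rpow_lt_one hα0.le hα1 hc
  have hville := measure_exists_le_prod_factorSeq_le (l := (betScale w H0 (α ^ c) hH0)⁻¹)
    hκmeas hindep (fun j => by have := hw j; omega)
    (fun j hj => hunif j hj 1 (mem_Icc.2 ⟨le_rfl, by have := hw j; omega⟩))
    (Real.rpow_nonneg hα0.le c) hb1.le (fun j => exp_inv_betScale_mul_le hw hH0 hb1)
    (one_div_pos.2 hα0)
  refine ofReal_one_sub_le_measure_of_measure_compl_le hα0.le
    ((measure_mono fun ω hω => ?_).trans (hville.trans_eq (by rw [one_div_one_div])))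
  simp only [Set.mem_compl_iff, Set.mem_ofPred_eq, not_forall, not_le] at hω
  obtain ⟨k, hk⟩ := hω
  refine ⟨k + 1, k.isLt, ?_⟩
  rw [prod_range_factorSeq, prod_Iic_nullFactor]
  by_contra! hlt
  refine hk.not_ge (div_le_of_exp_mul_rpow_pow_lt hα0 hα1.le hc.le (betScale_pos hw hH0 hb1)
    (one_pos.trans_le (le_max_right _ _)) (card_le_card fun j hj => ?_) hlt)
  simp only [mem_filter, mem_univ, true_and] at hj ⊢
  have := (mem_Icc.1 (hrange j ω)).1
  omega

/-- **Theorem 1 (cheap knockoffs, simultaneous wFDP control).**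
With integer costs `w j ≥ 2`, null set `H₀` nonempty, and selection statistics
`κ j` taking values in `{1, …, w j}` that are mutually independent and uniform on
`{1, …, w j}` for `j ∈ H₀`, for any `α ∈ (0,1)` and `c > 0`, with probability at
least `1 - α`, simultaneously for every `k`,
`wFDP(R_k) ≤ (-log α) · (1 + c·#{j ≤ k : κ_j > 1}) / max(C(R_k), 1)
  · max_{m ∈ H₀} [ ω_m / log(ω_m - (ω_m - 1)·α^c) ]`,
where `R_k = {j ≤ k : κ_j = 1}`, `C(A) = ∑_{j ∈ A} ω_j`, and
`wFDP(R_k) = C(R_k ∩ H₀) / max(C(R_k), 1)`. -/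
theorem cheap_knockoffs_simultaneous_wFDP_control
    {Ω : Type*} [MeasurableSpace Ω] (μ : Measure Ω) [IsProbabilityMeasure μ]
    (p : ℕ) (hp : 0 < p) (w : Fin p → ℕ) (hw : ∀ j, 2 ≤ w j)
    (H0 : Finset (Fin p)) (hH0 : H0.Nonempty)
    (κ : Fin p → Ω → ℕ)
    (hκmeas : ∀ j, Measurable (κ j))
    (hrange : ∀ j ω₀, κ j ω₀ ∈ Finset.Icc 1 (w j))
    (hindep : iIndepFun (m := fun _ : H0 => (inferInstance : MeasurableSpace ℕ))
      (fun j : H0 => κ j) μ)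
    (hunif : ∀ j ∈ H0, ∀ i ∈ Finset.Icc 1 (w j),
      μ {ω₀ | κ j ω₀ = i} = ENNReal.ofReal (1 / (w j : ℝ)))
    (α c : ℝ) (hα : α ∈ Set.Ioo (0 : ℝ) 1) (hc : 0 < c) :
    ENNReal.ofReal (1 - α) ≤
      μ {ω₀ | ∀ k : Fin p,
        (∑ j ∈ Finset.univ.filter (fun j => j ≤ k ∧ κ j ω₀ = 1 ∧ j ∈ H0), (w j : ℝ)) /
            max (∑ j ∈ Finset.univ.filter (fun j => j ≤ k ∧ κ j ω₀ = 1), (w j : ℝ)) 1 ≤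
          (- Real.log α) *
            ((1 + c * (Finset.univ.filter (fun j => j ≤ k ∧ 1 < κ j ω₀)).card) /
              max (∑ j ∈ Finset.univ.filter (fun j => j ≤ k ∧ κ j ω₀ = 1), (w j : ℝ)) 1) *
            (H0.sup' hH0 (fun m =>
              (w m : ℝ) / Real.log ((w m : ℝ) - ((w m : ℝ) - 1) * α ^ c)))} :=
  cheap_knockoffs_simultaneous_wFDP_control_general μ p w hw H0 hH0 κ hκmeas hrange hindep hunif α c
    hα hc
end

section
/- Let α ∈ (0,1) and c > 0, and let Ĥ₀ ⊆ {1,…,p} be any nonempty set with H₀ ⊆ Ĥ₀. Then P( for every k ∈ {1,…,p}: wFDP(R_k) ≤ (−log α) · (1 + c·#{j ≤ k : κ_j > 1}) / max(C(R_k), 1) · max_{m ∈ Ĥ₀} [ ω_m / log(ω_m − (ω_m − 1)·α^c) ] ) ≥ 1 − α. In particular, taking Ĥ₀ = {1,…,p} gives the computable bound Ū(R_k, c). -/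
/-!
For a null `j`, put `e_j = ω_j - (ω_j - 1) α^c` if `κ_j = 1` and `e_j = α^c` otherwise; under the
uniform law `E[e_j] = 1`. The products of the `e_j` over the nulls `j ≤ k` form a nonnegative
mean-one martingale in `k`, so by Ville's inequality they all stay below `1/α` with probability at
least `1 - α`. (Ville's inequality is obtained by splitting at the first crossing time: the
crossing event depends only on the factors seen so far, which are independent of the rest.)
Taking logarithms, on this event the selected nulls satisfy
`∑ log(ω_j - (ω_j - 1) α^c) ≤ -log α · (1 + c · #{j ≤ k : κ_j > 1})`,
and `ω_j ≤ M · log(ω_j - (ω_j - 1) α^c)` for `j ∈ Ĥ₀`, where `M` is the maximum in the bound.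
-/

open MeasureTheory ProbabilityTheory Finset Function
open scoped ENNReal

lemma lintegral_comp_eq_sum_of_forall_mem {Ω β : Type*} {mΩ : MeasurableSpace Ω} {μ : Measure Ω}
    [MeasurableSpace β] [Countable β] [MeasurableSingletonClass β]
    {X : Ω → β} (hX : Measurable X) {s : Finset β} (hs : ∀ ω, X ω ∈ s) (f : β → ℝ≥0∞) :
    ∫⁻ ω, f (X ω) ∂μ = ∑ b ∈ s, f b * μ (X ⁻¹' {b}) := by
  have hae : ∀ᵐ b ∂μ.map X, b ∈ (s : Set β) :=
    (ae_map_iff hX.aemeasurable s.measurableSet).2 (ae_of_all _ hs)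
  rw [← lintegral_map (measurable_of_countable f) hX, ← Measure.restrict_eq_self_of_ae_mem hae,
    lintegral_finset]
  simp_rw [Measure.map_apply hX (measurableSet_singleton _)]

lemma sum_le_sup'_div_mul_sum {ι : Type*} {s t : Finset ι} (hst : s ⊆ t) (ht : t.Nonempty)
    {a b : ι → ℝ} (hb : ∀ i ∈ s, 0 < b i) :
    ∑ i ∈ s, a i ≤ t.sup' ht (fun i => a i / b i) * ∑ i ∈ s, b i := by
  rw [mul_sum]
  refine sum_le_sum fun i hi => ?_
  rw [← div_le_iff₀ (hb i hi)]
  exact le_sup' (fun i => a i / b i) (hst hi)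

section Ville

variable {Ω ι : Type*} {mΩ : MeasurableSpace Ω} {μ : Measure Ω} {L : ι → Ω → ℝ≥0∞}

abbrev generatedBy (L : ι → Ω → ℝ≥0∞) (s : Set ι) : MeasurableSpace Ω :=
  ⨆ i ∈ s, MeasurableSpace.comap (L i) inferInstance

lemma generatedBy_mono {s t : Set ι} (hst : s ⊆ t) : generatedBy L s ≤ generatedBy L t :=
  biSup_mono hst

lemma generatedBy_le (hL : ∀ i, Measurable (L i)) (s : Set ι) : generatedBy L s ≤ mΩ :=
  iSup₂_le fun i _ => (hL i).comap_le

lemma measurable_generatedBy {s : Set ι} {i : ι} (hi : i ∈ s) :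
    Measurable[generatedBy L s] (L i) :=
  Measurable.of_comap_le <|
    le_iSup₂ (f := fun j (_ : j ∈ s) => MeasurableSpace.comap (L j) inferInstance) i hi

lemma measurable_prod_generatedBy (s : Finset ι) :
    Measurable[generatedBy L s] fun ω => ∏ i ∈ s, L i ω :=
  Finset.measurable_prod (m := generatedBy L s) s fun _ hi => measurable_generatedBy hi

lemma lintegral_mul_prod_of_disjoint (hind : iIndepFun L μ) (hL : ∀ i, Measurable (L i))
    (hmean : ∀ i, ∫⁻ ω, L i ω ∂μ = 1) {s : Set ι} {t : Finset ι} (hst : Disjoint s t)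
    {f : Ω → ℝ≥0∞} (hf : Measurable[generatedBy L s] f) :
    ∫⁻ ω, f ω * ∏ i ∈ t, L i ω ∂μ = ∫⁻ ω, f ω ∂μ := by
  have hindep : Indep (generatedBy L s) (generatedBy L t) μ :=
    indep_iSup_of_disjoint (fun i => (hL i).comap_le)
      ((iIndepFun_iff_iIndep _ _ _).1 hind) hst
  rw [lintegral_mul_eq_lintegral_mul_lintegral_of_independent_measurableSpace
    (generatedBy_le hL s) (generatedBy_le hL t) hindep hf (measurable_prod_generatedBy t),
    lintegral_prod_eq_prod_lintegral_of_indepFun t L hind hL]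
  simp [hmean]

lemma setLIntegral_prod_eq_of_measurableSet [Fintype ι] (hind : iIndepFun L μ)
    (hL : ∀ i, Measurable (L i)) (hmean : ∀ i, ∫⁻ ω, L i ω ∂μ = 1) {s : Finset ι} {E : Set Ω}
    (hE : MeasurableSet[generatedBy L s] E) :
    ∫⁻ ω in E, ∏ i ∈ s, L i ω ∂μ = ∫⁻ ω in E, ∏ i, L i ω ∂μ := by
  classical
  have hEm : MeasurableSet E := generatedBy_le hL _ _ hE
  rw [← lintegral_indicator hEm, ← lintegral_indicator hEm,
    ← lintegral_mul_prod_of_disjoint hind hL hmean (t := sᶜ) (by simp [disjoint_compl_right])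
      ((measurable_prod_generatedBy s).indicator hE)]
  refine lintegral_congr fun ω => ?_
  by_cases hω : ω ∈ E <;> simp [hω, Finset.prod_mul_prod_compl]

theorem mul_measure_exists_le_prod_le_one [Fintype ι] {τ : Type*} [Fintype τ] [LinearOrder τ]
    (hind : iIndepFun L μ) (hL : ∀ i, Measurable (L i)) (hmean : ∀ i, ∫⁻ ω, L i ω ∂μ = 1)
    {A : τ → Finset ι} (hA : Monotone A) (c : ℝ≥0∞) :
    c * μ {ω | ∃ k, c ≤ ∏ i ∈ A k, L i ω} ≤ 1 := by
  set M : τ → Ω → ℝ≥0∞ := fun k ω => ∏ i ∈ A k, L i ω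
  set P : τ → Set Ω := fun k => {ω | c ≤ M k ω ∧ ∀ j < k, M j ω < c}
  have hPmeas' : ∀ k, MeasurableSet[generatedBy L (A k)] (P k) := by
    intro k
    let _ := generatedBy L (A k)
    have hP : P k = {ω | c ≤ M k ω} ∩ ⋂ j, ⋂ (_ : j < k), {ω | M j ω < c} := by ext; simp [P]
    rw [hP]
    have hM : ∀ j ≤ k, Measurable (M j) := fun j hjk =>
      (measurable_prod_generatedBy (A j)).mono (generatedBy_mono (by simpa using hA hjk)) le_rfl
    exact (measurableSet_le measurable_const (hM k le_rfl)).inter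
      (MeasurableSet.iInter fun j => MeasurableSet.iInter fun (hjk : j < k) =>
        measurableSet_lt (hM j hjk.le) measurable_const)
  have hPmeas : ∀ k, MeasurableSet (P k) := fun k => generatedBy_le hL _ _ (hPmeas' k)
  have hdisj : Pairwise (Disjoint on P) := by
    intro j k hjk
    rcases hjk.lt_or_gt with h | h
    · exact Set.disjoint_left.2 fun ω hj hk => (hk.2 j h).not_ge hj.1
    · exact Set.disjoint_left.2 fun ω hj hk => (hj.2 k h).not_ge hk.1
  have hcover : {ω | ∃ k, c ≤ M k ω} = ⋃ k, P k := by
    ext ω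
    simp only [Set.mem_ofPred_eq, Set.mem_iUnion]
    constructor
    · rintro ⟨k, hk⟩
      obtain ⟨k₀, hk₀, hmin⟩ := wellFounded_lt.has_min {k | c ≤ M k ω} ⟨k, hk⟩
      exact ⟨k₀, hk₀, fun j hj => not_le.1 fun hcj => hmin j hcj hj⟩
    · rintro ⟨k, hk, -⟩
      exact ⟨k, hk⟩
  have hstep : ∀ k, c * μ (P k) ≤ ∫⁻ ω in P k, ∏ i, L i ω ∂μ := fun k =>
    calc c * μ (P k) = ∫⁻ _ in P k, c ∂μ := (setLIntegral_const _ _).symm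
      _ ≤ ∫⁻ ω in P k, M k ω ∂μ := setLIntegral_mono' (hPmeas k) fun ω hω => hω.1
      _ = ∫⁻ ω in P k, ∏ i, L i ω ∂μ :=
        setLIntegral_prod_eq_of_measurableSet hind hL hmean (hPmeas' k)
  calc c * μ {ω | ∃ k, c ≤ M k ω} = ∑ k, c * μ (P k) := by
        rw [hcover, measure_iUnion hdisj hPmeas, tsum_fintype, Finset.mul_sum]
    _ ≤ ∑ k, ∫⁻ ω in P k, ∏ i, L i ω ∂μ := Finset.sum_le_sum fun k _ => hstep k
    _ = ∫⁻ ω in ⋃ k, P k, ∏ i, L i ω ∂μ := by rw [lintegral_iUnion hPmeas hdisj, tsum_fintype]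
    _ ≤ ∫⁻ ω, ∏ i, L i ω ∂μ := setLIntegral_le_lintegral _ _
    _ = 1 := by simp [lintegral_prod_eq_prod_lintegral_of_indepFun _ _ hind hL, hmean]

theorem ofReal_one_sub_exp_neg_le_measure_forall_sum_le [Fintype ι] {τ : Type*} [Fintype τ]
    [LinearOrder τ] {Y : ι → Ω → ℝ} (hind : iIndepFun Y μ) (hY : ∀ i, Measurable (Y i))
    (hmean : ∀ i, ∫⁻ ω, ENNReal.ofReal (Real.exp (Y i ω)) ∂μ = 1)
    {A : τ → Finset ι} (hA : Monotone A) (t : ℝ) :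
    ENNReal.ofReal (1 - Real.exp (-t)) ≤ μ {ω | ∀ k, ∑ i ∈ A k, Y i ω ≤ t} := by
  have := hind.isProbabilityMeasure
  set Λ : ι → Ω → ℝ≥0∞ := fun i ω => ENNReal.ofReal (Real.exp (Y i ω))
  have hΛmeas : ∀ i, Measurable (Λ i) := fun i => (hY i).exp.ennreal_ofReal
  have hΛind : iIndepFun Λ μ :=
    hind.comp (fun _ y => ENNReal.ofReal (Real.exp y)) fun _ => by fun_prop
  have hbad : MeasurableSet {ω | ∃ k, t < ∑ i ∈ A k, Y i ω} := by
    simp only [Set.ofPred_exists]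
    exact MeasurableSet.iUnion fun k =>
      measurableSet_lt measurable_const (Finset.measurable_sum _ fun i _ => hY i)
  have hsub : {ω | ∃ k, t < ∑ i ∈ A k, Y i ω} ⊆
      {ω | ∃ k, ENNReal.ofReal (Real.exp t) ≤ ∏ i ∈ A k, Λ i ω} := by
    rintro ω ⟨k, hk⟩
    refine ⟨k, ?_⟩
    rw [← ENNReal.ofReal_prod_of_nonneg fun i _ => (Real.exp_pos _).le, ← Real.exp_sum]
    exact ENNReal.ofReal_le_ofReal (Real.exp_le_exp.2 hk.le)
  have hville : μ {ω | ∃ k, t < ∑ i ∈ A k, Y i ω} ≤ ENNReal.ofReal (Real.exp (-t)) := by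
    rw [Real.exp_neg, ENNReal.ofReal_inv_of_pos (Real.exp_pos t)]
    refine ENNReal.le_inv_iff_mul_le.2 ?_
    rw [mul_comm]
    exact (mul_le_mul_right (measure_mono hsub) _).trans
      (mul_measure_exists_le_prod_le_one hΛind hΛmeas hmean hA _)
  have hgood : {ω | ∀ k, ∑ i ∈ A k, Y i ω ≤ t} = {ω | ∃ k, t < ∑ i ∈ A k, Y i ω}ᶜ := by
    ext; simp
  rw [hgood, prob_compl_eq_one_sub hbad, ENNReal.ofReal_sub _ (Real.exp_pos _).le,
    ENNReal.ofReal_one]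
  exact tsub_le_tsub_left hville 1

end Ville

noncomputable def knockoffScore (w : ℕ) (α c : ℝ) (n : ℕ) : ℝ :=
  if n = 1 then Real.log (w - (w - 1) * α ^ c) else c * Real.log α

section KnockoffScore

variable {α c : ℝ}

lemma one_le_sub_mul_rpow {w : ℝ} (hw : 1 ≤ w) (hα0 : 0 < α) (hα1 : α ≤ 1) (hc : 0 ≤ c) :
    1 ≤ w - (w - 1) * α ^ c := by
  nlinarith [Real.rpow_le_one hα0.le hα1 hc]

lemma one_lt_sub_mul_rpow {w : ℝ} (hw : 1 < w) (hα0 : 0 < α) (hα1 : α < 1) (hc : 0 < c) :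
    1 < w - (w - 1) * α ^ c := by
  nlinarith [Real.rpow_lt_one hα0.le hα1 hc]

lemma sum_exp_knockoffScore {w : ℕ} (hw : 1 ≤ w) (hα0 : 0 < α) (hα1 : α ≤ 1) (hc : 0 ≤ c) :
    ∑ n ∈ Icc 1 w, Real.exp (knockoffScore w α c n) = w := by
  have hsplit : Icc 1 w = insert 1 (Icc 2 w) := by
    ext n; simp only [mem_Icc, mem_insert]; omega
  have hrest : ∀ n ∈ Icc 2 w, Real.exp (knockoffScore w α c n) = α ^ c := fun n hn => by
    rw [knockoffScore, if_neg (by simp only [mem_Icc] at hn; omega),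
      Real.rpow_def_of_pos hα0, mul_comm]
  have hpos : (0 : ℝ) < w - (w - 1) * α ^ c :=
    one_pos.trans_le (one_le_sub_mul_rpow (by exact_mod_cast hw) hα0 hα1 hc)
  rw [hsplit, sum_insert (by simp), sum_congr rfl hrest, sum_const, Nat.card_Icc, knockoffScore,
    if_pos rfl, Real.exp_log hpos, nsmul_eq_mul, Nat.cast_sub (by omega)]
  push_cast
  ring

lemma lintegral_ofReal_exp_knockoffScore {Ω : Type*} {mΩ : MeasurableSpace Ω} {μ : Measure Ω}
    {w : ℕ} (hw : 1 ≤ w) (hα0 : 0 < α) (hα1 : α ≤ 1) (hc : 0 ≤ c)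
    {X : Ω → ℕ} (hX : Measurable X) (hrange : ∀ ω, X ω ∈ Icc 1 w)
    (hunif : ∀ n ∈ Icc 1 w, μ {ω | X ω = n} = ENNReal.ofReal (1 / (w : ℝ))) :
    ∫⁻ ω, ENNReal.ofReal (Real.exp (knockoffScore w α c (X ω))) ∂μ = 1 := by
  have hw0 : (w : ℝ) ≠ 0 := by positivity
  rw [lintegral_comp_eq_sum_of_forall_mem hX hrange
      (fun n => ENNReal.ofReal (Real.exp (knockoffScore w α c n))),
    sum_congr rfl fun n hn => by
      rw [show X ⁻¹' {n} = {ω | X ω = n} from rfl, hunif n hn,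
        ← ENNReal.ofReal_mul (Real.exp_pos _).le],
    ← ENNReal.ofReal_sum_of_nonneg fun n _ => by positivity, ← sum_mul,
    sum_exp_knockoffScore hw hα0 hα1 hc, mul_one_div_cancel hw0, ENNReal.ofReal_one]

end KnockoffScore

lemma sum_knockoffScore_eq {ι : Type*} (s : Finset ι) (w n : ι → ℕ) (α c : ℝ) :
    ∑ i ∈ s, knockoffScore (w i) α c (n i) =
      ∑ i ∈ s with n i = 1, Real.log (w i - (w i - 1) * α ^ c) +
        #{i ∈ s | n i ≠ 1} * (c * Real.log α) := by
  rw [← sum_filter_add_sum_filter_not s (fun i => n i = 1)]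
  congr 1
  · exact sum_congr rfl fun i hi => by rw [knockoffScore, if_pos (mem_filter.1 hi).2]
  · rw [sum_congr rfl fun i hi => by rw [knockoffScore, if_neg (mem_filter.1 hi).2], sum_const,
      nsmul_eq_mul]

lemma sum_weight_le_of_sum_knockoffScore_le {p : ℕ} {w : Fin p → ℕ} (hw : ∀ j, 1 < w j)
    {H0 Hhat : Finset (Fin p)} (hHhat : Hhat.Nonempty) (hsub : H0 ⊆ Hhat)
    {n : Fin p → ℕ} (hn : ∀ j, 1 ≤ n j) {α c : ℝ} (hα0 : 0 < α) (hα1 : α < 1) (hc : 0 < c)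
    {k : Fin p} (hS : ∑ j ∈ H0 with j ≤ k, knockoffScore (w j) α c (n j) ≤ -Real.log α) :
    ∑ j with j ≤ k ∧ n j = 1 ∧ j ∈ H0, (w j : ℝ) ≤
      -Real.log α * (1 + c * #{j | j ≤ k ∧ 1 < n j}) *
        Hhat.sup' hHhat (fun m => (w m : ℝ) / Real.log (w m - (w m - 1) * α ^ c)) := by
  set l : Fin p → ℝ := fun j => Real.log (w j - (w j - 1) * α ^ c)
  set M := Hhat.sup' hHhat (fun m => (w m : ℝ) / l m)
  set T := {j ∈ {j ∈ H0 | j ≤ k} | n j = 1}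
  have hl : ∀ j, 0 < l j := fun j =>
    Real.log_pos (one_lt_sub_mul_rpow (by exact_mod_cast hw j) hα0 hα1 hc)
  have hM : 0 ≤ M := by
    obtain ⟨m, hm⟩ := hHhat
    have hwm : (0 : ℝ) < w m := Nat.cast_pos.2 (zero_lt_one.trans (hw m))
    exact (div_pos hwm (hl m)).le.trans (le_sup' (fun m => (w m : ℝ) / l m) hm)
  have hT : ({j | j ≤ k ∧ n j = 1 ∧ j ∈ H0} : Finset (Fin p)) = T := by
    ext j; simp only [T, mem_filter, mem_univ, true_and]; tauto
  have hcard : (#{j ∈ {j ∈ H0 | j ≤ k} | n j ≠ 1} : ℝ) ≤ #{j | j ≤ k ∧ 1 < n j} := by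
    refine Nat.mono_cast (card_le_card fun j hj => ?_)
    simp only [mem_filter, mem_univ, true_and] at hj ⊢
    exact ⟨hj.1.2, lt_of_le_of_ne (hn j) (Ne.symm hj.2)⟩
  have hlog : ∑ j ∈ T, l j ≤ -Real.log α * (1 + c * #{j | j ≤ k ∧ 1 < n j}) := by
    rw [sum_knockoffScore_eq] at hS
    change ∑ j ∈ T, l j + _ ≤ _ at hS
    have hcα : c * Real.log α ≤ 0 := mul_nonpos_of_nonneg_of_nonpos hc.le (Real.log_neg hα0 hα1).le
    nlinarith [mul_le_mul_of_nonpos_right hcard hcα]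
  calc ∑ j with j ≤ k ∧ n j = 1 ∧ j ∈ H0, (w j : ℝ)
      = ∑ j ∈ T, (w j : ℝ) := by rw [hT]
    _ ≤ M * ∑ j ∈ T, l j :=
        sum_le_sup'_div_mul_sum ((filter_subset _ _).trans ((filter_subset _ _).trans hsub))
          hHhat fun j _ => hl j
    _ ≤ M * (-Real.log α * (1 + c * #{j | j ≤ k ∧ 1 < n j})) := mul_le_mul_of_nonneg_left hlog hM
    _ = _ := mul_comm _ _

theorem cheap_knockoffs_wFDP_control_estimated_nulls_general
    {Ω : Type*} [MeasurableSpace Ω] (μ : Measure Ω) [IsProbabilityMeasure μ]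
    (p : ℕ) (w : Fin p → ℕ) (hw : ∀ j, 2 ≤ w j)
    (H0 : Finset (Fin p))
    (κ : Fin p → Ω → ℕ)
    (hκmeas : ∀ j, Measurable (κ j))
    (hrange : ∀ j ω₀, κ j ω₀ ∈ Finset.Icc 1 (w j))
    (hindep : iIndepFun
      (fun j : H0 => κ j) μ)
    (hunif : ∀ j ∈ H0, ∀ i ∈ Finset.Icc 1 (w j),
      μ {ω₀ | κ j ω₀ = i} = ENNReal.ofReal (1 / (w j : ℝ)))
    (α c : ℝ) (hα : α ∈ Set.Ioo (0 : ℝ) 1) (hc : 0 < c)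
    (Hhat : Finset (Fin p)) (hHhat : Hhat.Nonempty) (hsub : H0 ⊆ Hhat) :
    ENNReal.ofReal (1 - α) ≤
      μ {ω₀ | ∀ k : Fin p,
        (∑ j ∈ Finset.univ.filter (fun j => j ≤ k ∧ κ j ω₀ = 1 ∧ j ∈ H0), (w j : ℝ)) /
            max (∑ j ∈ Finset.univ.filter (fun j => j ≤ k ∧ κ j ω₀ = 1), (w j : ℝ)) 1 ≤
          (- Real.log α) *
            ((1 + c * (Finset.univ.filter (fun j => j ≤ k ∧ 1 < κ j ω₀)).card) /
              max (∑ j ∈ Finset.univ.filter (fun j => j ≤ k ∧ κ j ω₀ = 1), (w j : ℝ)) 1) *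
            (Hhat.sup' hHhat (fun m =>
              (w m : ℝ) / Real.log ((w m : ℝ) - ((w m : ℝ) - 1) * α ^ c)))} := by
  obtain ⟨hα0, hα1⟩ := hα
  set score : Fin p → ℕ → ℝ := fun j => knockoffScore (w j) α c
  have hgood := ofReal_one_sub_exp_neg_le_measure_forall_sum_le
    (hindep.comp (fun j => score j) fun _ => measurable_of_countable _)
    (fun j => (measurable_of_countable (score j)).comp (hκmeas j))
    (fun j => lintegral_ofReal_exp_knockoffScore (by linarith [hw j]) hα0 hα1.le hc.le
      (hκmeas j) (hrange j) (hunif j j.2))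
    (A := fun k : Fin p => {j : H0 | (j : Fin p) ≤ k})
    (fun k k' hkk' j => by simpa using (le_trans · hkk')) (-Real.log α)
  rw [neg_neg, Real.exp_log hα0] at hgood
  refine hgood.trans (measure_mono fun ω hω k => ?_)
  have hS : ∑ j ∈ H0 with j ≤ k, score j (κ j ω) ≤ -Real.log α := by
    have hωk := hω k
    rw [sum_filter] at hωk
    rwa [sum_filter, ← sum_coe_sort H0]
  have hnum := sum_weight_le_of_sum_knockoffScore_le hw hHhat hsub
    (fun j => (mem_Icc.1 (hrange j ω)).1) hα0 hα1 hc hS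
  have hden : (0 : ℝ) < max (∑ j with j ≤ k ∧ κ j ω = 1, (w j : ℝ)) 1 :=
    lt_max_of_lt_right one_pos
  calc _ ≤ _ / _ := div_le_div_of_nonneg_right hnum hden.le
    _ = _ := by ring

/-- **Remark (computable wFDP bound via an estimated null set).**
If `Ĥ₀ ⊇ H₀` is any nonempty superset of the null set, then with probability at
least `1 - α`, simultaneously for every `k`,
`wFDP(R_k) ≤ (-log α) · (1 + c·#{j ≤ k : κ_j > 1}) / max(C(R_k), 1)
  · max_{m ∈ Ĥ₀} [ ω_m / log(ω_m - (ω_m - 1)·α^c) ]`.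
Taking `Ĥ₀ = {1, …, p}` gives the computable bound `Ū(R_k, c)`. -/
theorem cheap_knockoffs_wFDP_control_estimated_nulls
    {Ω : Type*} [MeasurableSpace Ω] (μ : Measure Ω) [IsProbabilityMeasure μ]
    (p : ℕ) (hp : 0 < p) (w : Fin p → ℕ) (hw : ∀ j, 2 ≤ w j)
    (H0 : Finset (Fin p)) (hH0 : H0.Nonempty)
    (κ : Fin p → Ω → ℕ)
    (hκmeas : ∀ j, Measurable (κ j))
    (hrange : ∀ j ω₀, κ j ω₀ ∈ Finset.Icc 1 (w j))
    (hindep : iIndepFun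
      (fun j : H0 => κ j) μ)
    (hunif : ∀ j ∈ H0, ∀ i ∈ Finset.Icc 1 (w j),
      μ {ω₀ | κ j ω₀ = i} = ENNReal.ofReal (1 / (w j : ℝ)))
    (α c : ℝ) (hα : α ∈ Set.Ioo (0 : ℝ) 1) (hc : 0 < c)
    (Hhat : Finset (Fin p)) (hHhat : Hhat.Nonempty) (hsub : H0 ⊆ Hhat) :
    ENNReal.ofReal (1 - α) ≤
      μ {ω₀ | ∀ k : Fin p,
        (∑ j ∈ Finset.univ.filter (fun j => j ≤ k ∧ κ j ω₀ = 1 ∧ j ∈ H0), (w j : ℝ)) /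
            max (∑ j ∈ Finset.univ.filter (fun j => j ≤ k ∧ κ j ω₀ = 1), (w j : ℝ)) 1 ≤
          (- Real.log α) *
            ((1 + c * (Finset.univ.filter (fun j => j ≤ k ∧ 1 < κ j ω₀)).card) /
              max (∑ j ∈ Finset.univ.filter (fun j => j ≤ k ∧ κ j ω₀ = 1), (w j : ℝ)) 1) *
            (Hhat.sup' hHhat (fun m =>
              (w m : ℝ) / Real.log ((w m : ℝ) - ((w m : ℝ) - 1) * α ^ c)))} :=
  cheap_knockoffs_wFDP_control_estimated_nulls_general μ p w hw H0 κ hκmeas hrange hindep hunif α c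
    hα hc Hhat hHhat hsub
end

section
/- Let α ∈ (0,1) and c > 0, assume H₀ is nonempty, and set x* = (−c·log α) · max_{m ∈ H₀} [ ω_m / log(ω_m − (ω_m − 1)·α^c) ]. Then P( there exists k ∈ {1,…,p} with wFDP(R_k) ≥ x* · V(R_k, c) ) ≤ α. -/
open MeasureTheory ProbabilityTheory Finset

/-!
Under the null, `knockoffFactor α c ω_j κ_j`, which is `ω_j - (ω_j - 1) α^c` if `κ_j = 1` and
`α^c` otherwise, has mean one, so its partial products over the null indices `j ≤ k` form a
nonnegative martingale, which by Doob's maximal inequality (Ville's inequality) ever reaches `1/α`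
with probability at most `α`. Writing `x* = -c log α · L`, the choice of `L` gives
`log (ω_j - (ω_j - 1) α^c) ≥ ω_j / L`, so the logarithm of the `k`-th partial product is at least
`C(R_k ∩ H₀) / L + c log α · #{j ≤ k : κ_j > 1}`, and this is `≥ log (1/α)` whenever
`wFDP(R_k) ≥ x* · V(R_k, c)`.
-/

namespace MeasureTheory

variable {Ω ι : Type*} {mΩ : MeasurableSpace Ω} {μ : Measure Ω}

def Filtration.ofFinsets (Y : ι → Ω → ℝ) (hmeas : ∀ i, Measurable (Y i)) (s : ℕ → Finset ι)
    (hs : Monotone s) : Filtration ℕ mΩ where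
  seq n := ⨆ i ∈ s n, MeasurableSpace.comap (Y i) inferInstance
  mono' _ _ hmn := biSup_mono fun _ hi => hs hmn hi
  le' _ := iSup₂_le fun i _ => (hmeas i).comap_le

theorem Submartingale.measure_exists_ge_le {f : ℕ → Ω → ℝ} {𝓕 : Filtration ℕ mΩ}
    [IsFiniteMeasure μ] (hf : Submartingale f 𝓕 μ) (hnonneg : 0 ≤ f) {ε : ℝ} (hε : 0 < ε)
    (n : ℕ) : μ {ω | ∃ k ≤ n, ε ≤ f k ω} ≤ ENNReal.ofReal (μ[f n] / ε) := by
  lift ε to NNReal using hε.le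
  have hdoob := maximal_ineq hf hnonneg (ε := ε) n
  simp only [le_sup'_iff, mem_range, Nat.lt_succ_iff] at hdoob
  have hle : ∫ ω in {ω | ∃ k ≤ n, ε ≤ f k ω}, f n ω ∂μ ≤ μ[f n] :=
    setIntegral_le_integral (hf.integrable n) (ae_of_all _ (hnonneg n))
  rw [ENNReal.ofReal_div_of_pos hε,
    ENNReal.le_div_iff_mul_le (.inl (by simpa using hε.ne')) (.inl ENNReal.ofReal_ne_top),
    mul_comm, ENNReal.ofReal_coe_nnreal]
  exact hdoob.trans (ENNReal.ofReal_le_ofReal hle)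

end MeasureTheory

namespace ProbabilityTheory

variable {Ω ι : Type*} {mΩ : MeasurableSpace Ω} {μ : Measure Ω} {Y : ι → Ω → ℝ}

lemma iIndepFun.integrable_finsetProd (hY : iIndepFun Y μ) (hmeas : ∀ i, Measurable (Y i))
    (hint : ∀ i, Integrable (Y i) μ) (t : Finset ι) :
    Integrable (fun ω => ∏ i ∈ t, Y i ω) μ := by
  classical
  have := hY.isProbabilityMeasure
  induction t using Finset.induction_on with
  | empty => simp
  | insert a t ha ih =>
    rw [← Finset.prod_fn] at ih
    have hprod := (hY.indepFun_finsetProd_of_notMem hmeas ha).integrable_mul ih (hint a)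
    simp_rw [prod_insert ha, mul_comm (Y a _)]
    exact hprod.congr (ae_of_all _ fun ω => by simp [Finset.prod_apply])

lemma iIndepFun.integral_finsetProd (hY : iIndepFun Y μ) (hmeas : ∀ i, Measurable (Y i))
    (t : Finset ι) : ∫ ω, ∏ i ∈ t, Y i ω ∂μ = ∏ i ∈ t, ∫ ω, Y i ω ∂μ := by
  classical
  have := hY.isProbabilityMeasure
  induction t using Finset.induction_on with
  | empty => simp
  | insert a t ha ih =>
    have hprod := (hY.indepFun_finsetProd_of_notMem hmeas ha).integral_mul_eq_mul_integral
      (Finset.aestronglyMeasurable_prod t fun i _ => (hmeas i).aestronglyMeasurable)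
      (hmeas a).aestronglyMeasurable
    simp only [Pi.mul_apply, Finset.prod_apply] at hprod
    simp_rw [prod_insert ha, mul_comm (Y a _), hprod, ih, mul_comm]

theorem iIndepFun.martingale_finsetProd (hY : iIndepFun Y μ)
    (hmeas : ∀ i, Measurable (Y i)) (hint : ∀ i, Integrable (Y i) μ)
    (hmean : ∀ i, ∫ ω, Y i ω ∂μ = 1) (s : ℕ → Finset ι) (hs : Monotone s) :
    Martingale (fun n ω => ∏ i ∈ s n, Y i ω) (Filtration.ofFinsets Y hmeas s hs) μ := by
  classical
  have := hY.isProbabilityMeasure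
  set 𝓕 := Filtration.ofFinsets Y hmeas s hs
  have hmeas_sup : ∀ t : Finset ι,
      Measurable[⨆ i ∈ t, MeasurableSpace.comap (Y i) inferInstance] (fun ω => ∏ i ∈ t, Y i ω) :=
    fun t => Finset.measurable_prod t fun i hi =>
      (comap_measurable (Y i)).mono
        (le_iSup₂ (f := fun i (_ : i ∈ t) => MeasurableSpace.comap (Y i) inferInstance) i hi) le_rfl
  have hadapted : StronglyAdapted 𝓕 (fun n ω => ∏ i ∈ s n, Y i ω) :=
    fun n => (hmeas_sup (s n)).stronglyMeasurable
  refine martingale_nat hadapted (fun n => hY.integrable_finsetProd hmeas hint _) fun n => ?_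
  have hsplit : (fun ω => ∏ i ∈ s (n + 1), Y i ω) =
      (fun ω => ∏ i ∈ s n, Y i ω) * fun ω => ∏ i ∈ s (n + 1) \ s n, Y i ω := by
    ext ω
    rw [Pi.mul_apply, mul_comm]
    exact (prod_sdiff (hs n.le_succ)).symm
  have hindep : Indep (⨆ i ∈ s (n + 1) \ s n, MeasurableSpace.comap (Y i) inferInstance)
      (𝓕 n) μ :=
    indep_iSup_of_disjoint (fun i => (hmeas i).comap_le) hY
      (Finset.disjoint_coe.mpr sdiff_disjoint)
  have hincrement : μ[fun ω => ∏ i ∈ s (n + 1) \ s n, Y i ω | 𝓕 n] =ᵐ[μ] fun _ => 1 := by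
    refine (condExp_indep_eq (iSup₂_le fun i _ => (hmeas i).comap_le) (𝓕.le n)
      (hmeas_sup _).stronglyMeasurable hindep).trans (ae_of_all _ fun _ => ?_)
    simp [hY.integral_finsetProd hmeas, hmean]
  rw [hsplit]
  filter_upwards [condExp_mul_of_stronglyMeasurable_left (hadapted n)
    (hsplit ▸ hY.integrable_finsetProd hmeas hint _) (hY.integrable_finsetProd hmeas hint _),
    hincrement] with ω hmul hone
  simp [hmul, hone]

end ProbabilityTheory

noncomputable def knockoffFactor (α c : ℝ) (w v : ℕ) : ℝ :=
  if v = 1 then w - (w - 1) * α ^ c else α ^ c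

section KnockoffFactor

variable {α c : ℝ} {w : ℕ}

lemma one_lt_natCast_sub_mul_rpow (hα : α ∈ Set.Ioo (0 : ℝ) 1) (hc : 0 < c) (hw : 2 ≤ w) :
    1 < (w : ℝ) - ((w : ℝ) - 1) * α ^ c := by
  have hαc : α ^ c < 1 := Real.rpow_lt_one hα.1.le hα.2 hc
  have hw' : (2 : ℝ) ≤ w := by exact_mod_cast hw
  nlinarith

lemma le_sup'_mul_log {ι : Type*} (hα : α ∈ Set.Ioo (0 : ℝ) 1) (hc : 0 < c) {H0 : Finset ι}
    (hH0 : H0.Nonempty) (w : ι → ℕ) {m : ι} (hm : m ∈ H0) (hw : 2 ≤ w m) :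
    (w m : ℝ) ≤ H0.sup' hH0 (fun j => (w j : ℝ) / Real.log ((w j : ℝ) - ((w j : ℝ) - 1) * α ^ c)) *
      Real.log ((w m : ℝ) - ((w m : ℝ) - 1) * α ^ c) :=
  (div_le_iff₀ (Real.log_pos (one_lt_natCast_sub_mul_rpow hα hc hw))).mp
    (le_sup' (fun j => (w j : ℝ) / Real.log ((w j : ℝ) - ((w j : ℝ) - 1) * α ^ c)) hm)

lemma sup'_div_log_pos {ι : Type*} (hα : α ∈ Set.Ioo (0 : ℝ) 1) (hc : 0 < c) {H0 : Finset ι}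
    (hH0 : H0.Nonempty) (w : ι → ℕ) (hw : ∀ j ∈ H0, 2 ≤ w j) :
    0 < H0.sup' hH0 (fun j => (w j : ℝ) / Real.log ((w j : ℝ) - ((w j : ℝ) - 1) * α ^ c)) := by
  obtain ⟨m, hm⟩ := id hH0
  exact (lt_sup'_iff (H := hH0)).mpr ⟨m, hm, div_pos (Nat.cast_pos.mpr (by have := hw m hm; omega))
    (Real.log_pos (one_lt_natCast_sub_mul_rpow hα hc (hw m hm)))⟩

lemma knockoffFactor_pos (hα : α ∈ Set.Ioo (0 : ℝ) 1) (hc : 0 < c) (w v : ℕ) :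
    0 < knockoffFactor α c w v := by
  have hαc : 0 < α ^ c := Real.rpow_pos_of_pos hα.1 c
  have hαc1 : α ^ c < 1 := Real.rpow_lt_one hα.1.le hα.2 hc
  have hw : (0 : ℝ) ≤ w := w.cast_nonneg
  unfold knockoffFactor
  split_ifs <;> nlinarith

lemma knockoffFactor_le (hα : α ∈ Set.Ioo (0 : ℝ) 1) (hc : 0 < c) (hw : 1 ≤ w) (v : ℕ) :
    knockoffFactor α c w v ≤ w := by
  have hαc : 0 < α ^ c := Real.rpow_pos_of_pos hα.1 c
  have hαc1 : α ^ c < 1 := Real.rpow_lt_one hα.1.le hα.2 hc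
  have hw' : (1 : ℝ) ≤ w := by exact_mod_cast hw
  unfold knockoffFactor
  split_ifs <;> nlinarith

lemma integral_knockoffFactor {Ω : Type*} [MeasurableSpace Ω] {μ : Measure Ω}
    [IsProbabilityMeasure μ] {X : Ω → ℕ} (hX : Measurable X) (hw : w ≠ 0)
    (hX1 : μ {ω | X ω = 1} = ENNReal.ofReal (1 / w)) :
    ∫ ω, knockoffFactor α c w (X ω) ∂μ = 1 := by
  have hset : MeasurableSet {ω | X ω = 1} := hX (measurableSet_singleton 1)
  have hsplit : (fun ω => knockoffFactor α c w (X ω)) = fun ω =>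
      α ^ c + {ω | X ω = 1}.indicator (fun _ => (w : ℝ) - (w - 1) * α ^ c - α ^ c) ω := by
    ext ω
    by_cases h : X ω = 1 <;> simp [knockoffFactor, h]
  rw [hsplit, integral_add (integrable_const _) ((integrable_const _).indicator hset),
    integral_const, integral_indicator_const _ hset, probReal_univ, measureReal_def, hX1,
    ENNReal.toReal_ofReal (by positivity), smul_eq_mul, smul_eq_mul]
  field_simp
  ring

theorem measure_exists_inv_le_prod_knockoffFactor_le {Ω ι : Type*} [MeasurableSpace Ω]
    {μ : Measure Ω} (hα : α ∈ Set.Ioo (0 : ℝ) 1) (hc : 0 < c) (w : ι → ℕ) (hw : ∀ i, 1 ≤ w i)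
    (κ : ι → Ω → ℕ) (hκmeas : ∀ i, Measurable (κ i)) (hindep : iIndepFun κ μ)
    (hκ1 : ∀ i, μ {ω | κ i ω = 1} = ENNReal.ofReal (1 / w i)) (s : ℕ → Finset ι)
    (hs : Monotone s) (n : ℕ) :
    μ {ω | ∃ k ≤ n, α⁻¹ ≤ ∏ i ∈ s k, knockoffFactor α c (w i) (κ i ω)} ≤ ENNReal.ofReal α := by
  have := hindep.isProbabilityMeasure
  have hYmeas : ∀ i, Measurable fun ω => knockoffFactor α c (w i) (κ i ω) :=
    fun i => (measurable_of_countable (knockoffFactor α c (w i))).comp (hκmeas i)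
  have hYmean : ∀ i, ∫ ω, knockoffFactor α c (w i) (κ i ω) ∂μ = 1 :=
    fun i => integral_knockoffFactor (hκmeas i) (by have := hw i; omega) (hκ1 i)
  have hYint : ∀ i, Integrable (fun ω => knockoffFactor α c (w i) (κ i ω)) μ := fun i =>
    .of_bound (hYmeas i).aestronglyMeasurable (w i) (ae_of_all _ fun ω => by
      rw [Real.norm_of_nonneg (knockoffFactor_pos hα hc _ _).le]
      exact knockoffFactor_le hα hc (hw i) _)
  have hY : iIndepFun (fun i ω => knockoffFactor α c (w i) (κ i ω)) μ :=
    hindep.comp (fun i => knockoffFactor α c (w i)) fun _ => measurable_from_top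
  have hmart := hY.martingale_finsetProd hYmeas hYint hYmean s hs
  refine (hmart.submartingale.measure_exists_ge_le
    (fun k ω => (prod_pos fun i _ => knockoffFactor_pos hα hc _ (κ i ω)).le)
    (inv_pos.mpr hα.1) n).trans_eq ?_
  rw [hY.integral_finsetProd hYmeas, prod_eq_one fun i _ => hYmean i]
  simp

lemma sum_le_log_prod_knockoffFactor {ι : Type*} (hα : α ∈ Set.Ioo (0 : ℝ) 1) (hc : 0 < c)
    (T : Finset ι) (w v : ι → ℕ) {L : ℝ} (hL : 0 < L)
    (hwL : ∀ j ∈ T, (w j : ℝ) ≤ L * Real.log ((w j : ℝ) - ((w j : ℝ) - 1) * α ^ c)) :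
    L⁻¹ * ∑ j ∈ T with v j = 1, (w j : ℝ) + #{j ∈ T | v j ≠ 1} * (c * Real.log α) ≤
      Real.log (∏ j ∈ T, knockoffFactor α c (w j) (v j)) := by
  rw [Real.log_prod fun j _ => (knockoffFactor_pos hα hc (w j) (v j)).ne']
  simp only [knockoffFactor, apply_ite Real.log, Real.log_rpow hα.1, sum_ite, sum_const,
    nsmul_eq_mul, mul_sum]
  gcongr with j hj
  rw [inv_mul_le_iff₀ hL]
  exact hwL j (mem_filter.mp hj).1

lemma inv_le_prod_knockoffFactor {ι : Type*} (hα : α ∈ Set.Ioo (0 : ℝ) 1) (hc : 0 < c)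
    (T : Finset ι) (w v : ι → ℕ) {L : ℝ} (hL : 0 < L)
    (hwL : ∀ j ∈ T, (w j : ℝ) ≤ L * Real.log ((w j : ℝ) - ((w j : ℝ) - 1) * α ^ c))
    {n : ℕ} (hn : #{j ∈ T | v j ≠ 1} ≤ n)
    (hsum : (-c * Real.log α) * L * (c⁻¹ + n) ≤ ∑ j ∈ T with v j = 1, (w j : ℝ)) :
    α⁻¹ ≤ ∏ j ∈ T, knockoffFactor α c (w j) (v j) := by
  have hlogα : Real.log α < 0 := Real.log_neg hα.1 hα.2
  rw [← Real.log_le_log_iff (inv_pos.mpr hα.1)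
    (prod_pos fun j _ => knockoffFactor_pos hα hc (w j) (v j)), Real.log_inv]
  refine le_trans ?_ (sum_le_log_prod_knockoffFactor hα hc T w v hL hwL)
  have hcard : (n : ℝ) * (c * Real.log α) ≤ #{j ∈ T | v j ≠ 1} * (c * Real.log α) :=
    mul_le_mul_of_nonpos_right (by exact_mod_cast hn) (by nlinarith)
  have hscaled := mul_le_mul_of_nonneg_left hsum (inv_nonneg.mpr hL.le)
  have hexpand :
      L⁻¹ * ((-c * Real.log α) * L * (c⁻¹ + n)) = -Real.log α - n * (c * Real.log α) := by
    field_simp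
    ring
  linarith

end KnockoffFactor

theorem cheap_knockoffs_key_lemma_general
    {Ω : Type*} [MeasurableSpace Ω] (μ : Measure Ω) [IsProbabilityMeasure μ]
    (p : ℕ) (w : Fin p → ℕ) (hw : ∀ j, 2 ≤ w j)
    (H0 : Finset (Fin p)) (hH0 : H0.Nonempty)
    (κ : Fin p → Ω → ℕ)
    (hκmeas : ∀ j, Measurable (κ j))
    (hrange : ∀ j ω₀, κ j ω₀ ∈ Finset.Icc 1 (w j))
    (hindep : iIndepFun (m := fun _ : H0 => (inferInstance : MeasurableSpace ℕ))
      (fun j : H0 => κ j) μ)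
    (hunif : ∀ j ∈ H0, ∀ i ∈ Finset.Icc 1 (w j),
      μ {ω₀ | κ j ω₀ = i} = ENNReal.ofReal (1 / (w j : ℝ)))
    (α c : ℝ) (hα : α ∈ Set.Ioo (0 : ℝ) 1) (hc : 0 < c) :
    μ {ω₀ | ∃ k : Fin p,
        ((- c * Real.log α) *
            (H0.sup' hH0 (fun m =>
              (w m : ℝ) / Real.log ((w m : ℝ) - ((w m : ℝ) - 1) * α ^ c)))) *
          ((c⁻¹ + (Finset.univ.filter (fun j => j ≤ k ∧ 1 < κ j ω₀)).card) /
            max (∑ j ∈ Finset.univ.filter (fun j => j ≤ k ∧ κ j ω₀ = 1), (w j : ℝ)) 1) ≤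
        (∑ j ∈ Finset.univ.filter (fun j => j ≤ k ∧ κ j ω₀ = 1 ∧ j ∈ H0), (w j : ℝ)) /
          max (∑ j ∈ Finset.univ.filter (fun j => j ≤ k ∧ κ j ω₀ = 1), (w j : ℝ)) 1} ≤
      ENNReal.ofReal α := by
  classical
  have hL := sup'_div_log_pos hα hc hH0 w fun j _ => hw j
  refine (measure_mono ?_).trans (measure_exists_inv_le_prod_knockoffFactor_le hα hc
    (fun j : H0 => w j) (fun j => one_le_two.trans (hw j)) (fun j : H0 => κ j) (fun j => hκmeas j)
    hindep (fun j => hunif j j.2 1 (mem_Icc.mpr ⟨le_rfl, one_le_two.trans (hw j)⟩))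
    (fun n => (univ.filter fun j : Fin p => (j : ℕ) ≤ n).subtype (· ∈ H0))
    (fun _ _ hmn => subtype_mono fun j => by simp only [mem_filter, mem_univ, true_and]; omega)
    (p - 1))
  rintro ω ⟨k, hk⟩
  refine ⟨k, by omega, ?_⟩
  rw [← mul_div_assoc, div_le_div_iff_of_pos_right (lt_max_of_lt_right one_pos)] at hk
  rw [prod_subtype_eq_prod_filter fun j => knockoffFactor α c (w j) (κ j ω), filter_filter]
  refine inv_le_prod_knockoffFactor hα hc _ w (κ · ω) hL
    (fun j hj => le_sup'_mul_log hα hc hH0 w (mem_filter.mp hj).2.2 (hw j))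
    (card_le_card (t := {j | j ≤ k ∧ 1 < κ j ω}) fun j hj => ?_) (hk.trans_eq ?_)
  · have := (mem_Icc.mp (hrange j ω)).1
    simp only [mem_filter, mem_univ, true_and, Fin.val_fin_le] at hj ⊢
    omega
  · congr 1
    ext j
    simp only [mem_filter, mem_univ, true_and, Fin.val_fin_le]
    tauto

/-- **Key lemma (uniform bound on the wFDP/V ratio).**
With `x* = (-c·log α) · max_{m ∈ H₀} [ ω_m / log(ω_m - (ω_m - 1)·α^c) ]`, the
probability that there exists `k` with `wFDP(R_k) ≥ x* · V(R_k, c)` is at most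
`α`, where `V(R_k, c) = (c⁻¹ + #{j ≤ k : κ_j > 1}) / max(C(R_k), 1)`. -/
theorem cheap_knockoffs_key_lemma
    {Ω : Type*} [MeasurableSpace Ω] (μ : Measure Ω) [IsProbabilityMeasure μ]
    (p : ℕ) (hp : 0 < p) (w : Fin p → ℕ) (hw : ∀ j, 2 ≤ w j)
    (H0 : Finset (Fin p)) (hH0 : H0.Nonempty)
    (κ : Fin p → Ω → ℕ)
    (hκmeas : ∀ j, Measurable (κ j))
    (hrange : ∀ j ω₀, κ j ω₀ ∈ Finset.Icc 1 (w j))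
    (hindep : iIndepFun (m := fun _ : H0 => (inferInstance : MeasurableSpace ℕ))
      (fun j : H0 => κ j) μ)
    (hunif : ∀ j ∈ H0, ∀ i ∈ Finset.Icc 1 (w j),
      μ {ω₀ | κ j ω₀ = i} = ENNReal.ofReal (1 / (w j : ℝ)))
    (α c : ℝ) (hα : α ∈ Set.Ioo (0 : ℝ) 1) (hc : 0 < c) :
    μ {ω₀ | ∃ k : Fin p,
        ((- c * Real.log α) *
            (H0.sup' hH0 (fun m =>
              (w m : ℝ) / Real.log ((w m : ℝ) - ((w m : ℝ) - 1) * α ^ c)))) *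
          ((c⁻¹ + (Finset.univ.filter (fun j => j ≤ k ∧ 1 < κ j ω₀)).card) /
            max (∑ j ∈ Finset.univ.filter (fun j => j ≤ k ∧ κ j ω₀ = 1), (w j : ℝ)) 1) ≤
        (∑ j ∈ Finset.univ.filter (fun j => j ≤ k ∧ κ j ω₀ = 1 ∧ j ∈ H0), (w j : ℝ)) /
          max (∑ j ∈ Finset.univ.filter (fun j => j ≤ k ∧ κ j ω₀ = 1), (w j : ℝ)) 1} ≤
      ENNReal.ofReal α :=
  cheap_knockoffs_key_lemma_general μ p w hw H0 hH0 κ hκmeas hrange hindep hunif α c hα hc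
end

section
/- Let α ∈ (0,1), c > 0, assume H₀ is nonempty, let θ* = min_{m ∈ H₀} [ ω_m^{-1} · log(ω_m − (ω_m − 1)·α^c) ], let θ satisfy 0 < θ ≤ θ*, and set x = −c·log α / θ. Define Z_0 = 1 and, for k ∈ {1,…,p}, Z_k = exp( θ · Σ_{j ≤ k, j ∈ H₀} ( ω_j·1{κ_j = 1} − x·1{κ_j > 1} ) ). Let F_k be the σ-algebra generated by {κ_j : j ≤ k, j ∈ H₀} (with F_0 the trivial σ-algebra). Then (Z_k)_{k=0}^{p} is a supermartingale with respect to (F_k)_{k=0}^{p}: for each k ∈ {1,…,p}, E[Z_k | F_{k−1}] ≤ Z_{k−1} almost surely. -/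
/-!
Write `Z_k = Z_{k-1} · exp (θ ξ_k)`, where `ξ_k = ω_k 1{κ_k = 1} - x 1{κ_k > 1}` if `k ∈ H₀`
and `ξ_k = 0` otherwise. `Z_{k-1}` is `F_{k-1}`-measurable and, for `k ∈ H₀`, `κ_k` is
independent of `F_{k-1}`, so `E[Z_k | F_{k-1}] = Z_{k-1} · E[exp (θ ξ_k)]`. As `κ_k` is uniform
and `e^{-θx} = α^c`, `E[exp (θ ξ_k)] = ω⁻¹ e^{θω} + (1 - ω⁻¹) α^c`, and `θ ≤ θ*` says exactly
`e^{θω} ≤ ω - (ω - 1) α^c`, which makes this expectation at most `1`.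
-/

open MeasureTheory ProbabilityTheory Finset

theorem inv_mul_exp_add_le_one {w a θ : ℝ} (hw : 1 ≤ w) (ha : a ≤ 1)
    (hθ : θ ≤ w⁻¹ * Real.log (w - (w - 1) * a)) :
    w⁻¹ * Real.exp (θ * w) + (1 - w⁻¹) * a ≤ 1 := by
  have hpos : 0 < w - (w - 1) * a := by nlinarith
  have hexp : Real.exp (θ * w) ≤ w - (w - 1) * a := by
    calc Real.exp (θ * w) ≤ Real.exp (Real.log (w - (w - 1) * a)) := by
          gcongr
          calc θ * w ≤ w⁻¹ * Real.log (w - (w - 1) * a) * w := by gcongr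
            _ = _ := by field_simp
      _ = w - (w - 1) * a := Real.exp_log hpos
  calc w⁻¹ * Real.exp (θ * w) + (1 - w⁻¹) * a ≤ w⁻¹ * (w - (w - 1) * a) + (1 - w⁻¹) * a := by
        gcongr
    _ = 1 := by field_simp; ring

def knockoffIncrement (w : ℕ) (x : ℝ) (i : ℕ) : ℝ :=
  (w : ℝ) * (if i = 1 then 1 else 0) - x * (if 1 < i then 1 else 0)

theorem knockoffIncrement_of_one_le {w : ℕ} {x : ℝ} {i : ℕ} (hi : 1 ≤ i) :
    knockoffIncrement w x i = if i = 1 then (w : ℝ) else -x := by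
  unfold knockoffIncrement
  split_ifs <;> first | omega | ring

theorem abs_knockoffIncrement_le (w : ℕ) (x : ℝ) (i : ℕ) :
    |knockoffIncrement w x i| ≤ w + |x| := by
  have hw : (0 : ℝ) ≤ w := w.cast_nonneg
  have := neg_abs_le x
  have := le_abs_self x
  unfold knockoffIncrement
  rw [abs_le]
  split_ifs <;> constructor <;> linarith

section Integrals

variable {Ω : Type*} [MeasurableSpace Ω] {μ : Measure Ω}

theorem integral_piecewise_const [IsProbabilityMeasure μ] {s : Set Ω} [DecidablePred (· ∈ s)]
    (hs : MeasurableSet s) (a b : ℝ) :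
    ∫ ω, s.piecewise (fun _ => a) (fun _ => b) ω ∂μ = μ.real s * a + (1 - μ.real s) * b := by
  rw [integral_piecewise hs integrableOn_const integrableOn_const, setIntegral_const,
    setIntegral_const, probReal_compl_eq_one_sub hs, smul_eq_mul, smul_eq_mul]

theorem integral_exp_mul_knockoffIncrement [IsProbabilityMeasure μ] {K : Ω → ℕ}
    (hK : Measurable K) (hK1 : ∀ ω, 1 ≤ K ω) {w : ℕ}
    (hw : μ {ω | K ω = 1} = ENNReal.ofReal (1 / w)) (x θ : ℝ) :
    ∫ ω, Real.exp (θ * knockoffIncrement w x (K ω)) ∂μ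
      = (w : ℝ)⁻¹ * Real.exp (θ * w) + (1 - (w : ℝ)⁻¹) * Real.exp (-(θ * x)) := by
  classical
  have hpiece : (fun ω => Real.exp (θ * knockoffIncrement w x (K ω)))
      = {ω | K ω = 1}.piecewise (fun _ => Real.exp (θ * w)) (fun _ => Real.exp (-(θ * x))) := by
    ext ω
    rw [knockoffIncrement_of_one_le (hK1 ω)]
    by_cases h : K ω = 1 <;> simp [Set.piecewise, h]
  have hreal : μ.real {ω | K ω = 1} = (w : ℝ)⁻¹ := by
    rw [measureReal_def, hw, ENNReal.toReal_ofReal (by positivity), one_div]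
  have hs : MeasurableSet {ω | K ω = 1} := hK (measurableSet_singleton 1)
  rw [hpiece, integral_piecewise_const hs, hreal]

theorem integral_exp_mul_knockoffIncrement_le_one [IsProbabilityMeasure μ] {K : Ω → ℕ}
    (hK : Measurable K) (hK1 : ∀ ω, 1 ≤ K ω) {w : ℕ} (hw1 : 1 ≤ w)
    (hw : μ {ω | K ω = 1} = ENNReal.ofReal (1 / w)) {α c θ x : ℝ} (hα0 : 0 < α) (hα1 : α ≤ 1)
    (hc : 0 ≤ c) (hθ0 : θ ≠ 0)
    (hθ : θ ≤ (w : ℝ)⁻¹ * Real.log (w - (w - 1) * α ^ c)) (hx : x = -c * Real.log α / θ) :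
    ∫ ω, Real.exp (θ * knockoffIncrement w x (K ω)) ∂μ ≤ 1 := by
  have hexp : Real.exp (-(θ * x)) = α ^ c := by
    rw [hx, mul_div_cancel₀ _ hθ0, neg_mul, neg_neg, Real.rpow_def_of_pos hα0, mul_comm]
  rw [integral_exp_mul_knockoffIncrement hK hK1 hw, hexp]
  exact inv_mul_exp_add_le_one (by exact_mod_cast hw1) (Real.rpow_le_one hα0.le hα1 hc) hθ

end Integrals

theorem condExp_mul_le_of_indep {Ω : Type*} {m mg m0 : MeasurableSpace Ω} {μ : Measure[m0] Ω}
    [IsFiniteMeasure μ] (hm : m ≤ m0) (hmg : mg ≤ m0) {f g : Ω → ℝ}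
    (hf : StronglyMeasurable[m] f) (hf0 : 0 ≤ f) (hg : StronglyMeasurable[mg] g)
    (hindep : Indep mg m μ) (hfg : Integrable (f * g) μ) (hgi : Integrable g μ)
    (hg1 : ∫ ω, g ω ∂μ ≤ 1) :
    μ[f * g | m] ≤ᵐ[μ] f := by
  filter_upwards [condExp_mul_of_stronglyMeasurable_left hf hfg hgi,
    condExp_indep_eq hmg hm hg hindep] with ω hpull hconst
  rw [hpull, Pi.mul_apply, hconst]
  exact mul_le_of_le_one_right (hf0 ω) hg1

section Processes

variable {Ω ι β : Type*} [mβ : MeasurableSpace β]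

theorem measurable_biSup_comap_sum (S : Finset ι) (κ : ι → Ω → β) {f : ι → β → ℝ}
    (hf : ∀ j, Measurable (f j)) :
    Measurable[⨆ j ∈ S, MeasurableSpace.comap (κ j) mβ] fun ω => ∑ j ∈ S, f j (κ j ω) :=
  Finset.measurable_sum S fun j hj =>
    (hf j).comp ((comap_measurable (κ j)).mono (le_iSup₂ (f := fun j (_ : j ∈ S) =>
      MeasurableSpace.comap (κ j) mβ) j hj) le_rfl)

variable [MeasurableSpace Ω] {μ : Measure Ω}

theorem integrable_exp_mul_sum_knockoffIncrement [IsFiniteMeasure μ] {κ : ι → Ω → ℕ}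
    (hκ : ∀ j, Measurable (κ j)) (S : Finset ι) (w : ι → ℕ) (x θ : ℝ) :
    Integrable (fun ω => Real.exp (θ * ∑ j ∈ S, knockoffIncrement (w j) x (κ j ω))) μ := by
  refine .of_bound (by fun_prop) (Real.exp (|θ| * ∑ j ∈ S, ((w j : ℝ) + |x|)))
    (.of_forall fun ω => ?_)
  rw [Real.norm_eq_abs, Real.abs_exp, Real.exp_le_exp]
  calc θ * ∑ j ∈ S, knockoffIncrement (w j) x (κ j ω)
      ≤ |θ * ∑ j ∈ S, knockoffIncrement (w j) x (κ j ω)| := le_abs_self _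
    _ ≤ |θ| * ∑ j ∈ S, ((w j : ℝ) + |x|) := by
      rw [abs_mul]
      gcongr
      exact (abs_sum_le_sum_abs _ _).trans
        (sum_le_sum fun j _ => abs_knockoffIncrement_le _ _ _)

theorem indep_comap_biSup_comap_of_iIndepFun {s : Finset ι} {f : ι → Ω → β}
    (hf : ∀ i, Measurable (f i)) (h : iIndepFun (fun i : s => f i) μ) {i : ι} (hi : i ∈ s)
    {T : Finset ι} (hTs : T ⊆ s) (hiT : i ∉ T) :
    Indep (MeasurableSpace.comap (f i) mβ) (⨆ j ∈ T, MeasurableSpace.comap (f j) mβ) μ := by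
  have hdisj : Disjoint ({⟨i, hi⟩} : Set s) {j | (j : ι) ∈ T} := by
    simp [hiT]
  have hT : ⨆ j ∈ {j : s | (j : ι) ∈ T}, MeasurableSpace.comap (f j) mβ
      = ⨆ j ∈ T, MeasurableSpace.comap (f j) mβ :=
    le_antisymm (iSup₂_le fun j hj => le_iSup₂ (f := fun j (_ : j ∈ T) =>
        MeasurableSpace.comap (f j) mβ) (j : ι) hj)
      (iSup₂_le fun j hj => le_iSup₂ (f := fun (j : s) (_ : j ∈ {j : s | (j : ι) ∈ T}) =>
        MeasurableSpace.comap (f j) mβ) ⟨j, hTs hj⟩ hj)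
  simpa only [_root_.iSup_singleton, hT] using
    indep_iSup_of_disjoint (fun j : s => (hf j).comap_le) h.iIndep hdisj

end Processes

def nullsBefore {p : ℕ} (H0 : Finset (Fin p)) (k : ℕ) : Finset (Fin p) :=
  univ.filter fun j => (j : ℕ) < k ∧ j ∈ H0

section NullsBefore

variable {p n : ℕ} {H0 : Finset (Fin p)} {hn : n < p}

theorem nullsBefore_subset {k : ℕ} : nullsBefore H0 k ⊆ H0 :=
  fun _ hj => (mem_filter.1 hj).2.2

theorem notMem_nullsBefore_self : (⟨n, hn⟩ : Fin p) ∉ nullsBefore H0 n := by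
  simp [nullsBefore]

theorem nullsBefore_succ_of_mem (h : (⟨n, hn⟩ : Fin p) ∈ H0) :
    nullsBefore H0 (n + 1) = insert ⟨n, hn⟩ (nullsBefore H0 n) := by
  ext j
  simp only [nullsBefore, mem_insert, mem_filter, mem_univ, true_and, Nat.lt_succ_iff_lt_or_eq]
  constructor
  · rintro ⟨hj | hj, hjH⟩
    exacts [Or.inr ⟨hj, hjH⟩, Or.inl (Fin.ext hj)]
  · rintro (rfl | ⟨hj, hjH⟩)
    exacts [⟨Or.inr rfl, h⟩, ⟨Or.inl hj, hjH⟩]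

theorem nullsBefore_succ_of_notMem (h : (⟨n, hn⟩ : Fin p) ∉ H0) :
    nullsBefore H0 (n + 1) = nullsBefore H0 n := by
  ext j
  simp only [nullsBefore, mem_filter, mem_univ, true_and, Nat.lt_succ_iff_lt_or_eq]
  refine ⟨fun ⟨hj, hjH⟩ => ⟨hj.resolve_right fun hjn => h ?_, hjH⟩,
    fun ⟨hj, hjH⟩ => ⟨.inl hj, hjH⟩⟩
  rwa [← show j = ⟨n, hn⟩ from Fin.ext hjn]

end NullsBefore

section KnockoffProcess

variable {Ω : Type*} {p : ℕ} (H0 : Finset (Fin p)) (κ : Fin p → Ω → ℕ) (w : Fin p → ℕ) (x θ : ℝ)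

noncomputable def knockoffProcess (k : ℕ) (ω : Ω) : ℝ :=
  Real.exp (θ * ∑ j ∈ nullsBefore H0 k, knockoffIncrement (w j) x (κ j ω))

abbrev nullFiltration (k : ℕ) : MeasurableSpace Ω :=
  ⨆ j ∈ nullsBefore H0 k, MeasurableSpace.comap (κ j) inferInstance

theorem knockoffProcess_nonneg (k : ℕ) : 0 ≤ knockoffProcess H0 κ w x θ k :=
  fun _ => (Real.exp_pos _).le

theorem stronglyMeasurable_knockoffProcess (k : ℕ) :
    StronglyMeasurable[nullFiltration H0 κ k] (knockoffProcess H0 κ w x θ k) :=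
  ((measurable_biSup_comap_sum _ κ fun _ => measurable_from_top).const_mul θ).exp
    |>.stronglyMeasurable

theorem stronglyMeasurable_exp_mul_knockoffIncrement (j : Fin p) :
    StronglyMeasurable[MeasurableSpace.comap (κ j) inferInstance]
      fun ω => Real.exp (θ * knockoffIncrement (w j) x (κ j ω)) :=
  ((measurable_from_top (f := knockoffIncrement (w j) x)).comp
    (comap_measurable (κ j))).const_mul θ |>.exp |>.stronglyMeasurable

variable {H0 κ w x θ} {n : ℕ} {hn : n < p}

theorem knockoffProcess_succ_of_mem (h : (⟨n, hn⟩ : Fin p) ∈ H0) :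
    knockoffProcess H0 κ w x θ (n + 1) = knockoffProcess H0 κ w x θ n
      * fun ω => Real.exp (θ * knockoffIncrement (w ⟨n, hn⟩) x (κ ⟨n, hn⟩ ω)) := by
  funext ω
  rw [Pi.mul_apply, knockoffProcess, knockoffProcess, nullsBefore_succ_of_mem h,
    sum_insert notMem_nullsBefore_self, mul_add, Real.exp_add, mul_comm]

theorem knockoffProcess_succ_of_notMem (h : (⟨n, hn⟩ : Fin p) ∉ H0) :
    knockoffProcess H0 κ w x θ (n + 1) = knockoffProcess H0 κ w x θ n := by
  unfold knockoffProcess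
  rw [nullsBefore_succ_of_notMem h]

variable [MeasurableSpace Ω]

theorem nullFiltration_le (hκ : ∀ j, Measurable (κ j)) (k : ℕ) :
    nullFiltration H0 κ k ≤ ‹MeasurableSpace Ω› :=
  iSup₂_le fun j _ => (hκ j).comap_le

end KnockoffProcess

theorem cheap_knockoffs_supermartingale_general
    {Ω : Type*} [MeasurableSpace Ω] (μ : Measure Ω) [IsProbabilityMeasure μ]
    (p : ℕ) (w : Fin p → ℕ) (hw : ∀ j, 2 ≤ w j)
    (H0 : Finset (Fin p)) (hH0 : H0.Nonempty)
    (κ : Fin p → Ω → ℕ)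
    (hκmeas : ∀ j, Measurable (κ j))
    (hrange : ∀ j ω₀, κ j ω₀ ∈ Finset.Icc 1 (w j))
    (hindep : iIndepFun
      (fun j : H0 => κ j) μ)
    (hunif : ∀ j ∈ H0, ∀ i ∈ Finset.Icc 1 (w j),
      μ {ω₀ | κ j ω₀ = i} = ENNReal.ofReal (1 / (w j : ℝ)))
    (α c : ℝ) (hα : α ∈ Set.Ioo (0 : ℝ) 1) (hc : 0 < c)
    (θ : ℝ) (hθpos : 0 < θ)
    (hθle : θ ≤ H0.inf' hH0 (fun m =>
      ((w m : ℝ))⁻¹ * Real.log ((w m : ℝ) - ((w m : ℝ) - 1) * α ^ c)))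
    (x : ℝ) (hx : x = - c * Real.log α / θ)
    (Z : ℕ → Ω → ℝ)
    (hZ : ∀ k ω₀, Z k ω₀ = Real.exp (θ *
      ∑ j ∈ Finset.univ.filter (fun j : Fin p => (j : ℕ) < k ∧ j ∈ H0),
        ((w j : ℝ) * (if κ j ω₀ = 1 then 1 else 0)
          - x * (if 1 < κ j ω₀ then 1 else 0))))
    (F : ℕ → MeasurableSpace Ω)
    (hF : ∀ k, F k = ⨆ j ∈ Finset.univ.filter (fun j : Fin p => (j : ℕ) < k ∧ j ∈ H0),
      MeasurableSpace.comap (κ j) inferInstance) :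
    ∀ k, 1 ≤ k → k ≤ p → μ[Z k | F (k - 1)] ≤ᵐ[μ] Z (k - 1) := by
  intro k hk1 hkp
  obtain ⟨n, rfl⟩ : ∃ n, k = n + 1 := ⟨k - 1, by omega⟩
  obtain rfl : Z = knockoffProcess H0 κ w x θ := funext fun m => funext (hZ m)
  obtain rfl : F = nullFiltration H0 κ := funext hF
  rw [Nat.add_sub_cancel]
  have hint : ∀ m, Integrable (knockoffProcess H0 κ w x θ m) μ := fun m =>
    integrable_exp_mul_sum_knockoffIncrement hκmeas _ w x θ
  set j₀ : Fin p := ⟨n, by omega⟩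
  by_cases hj₀ : j₀ ∈ H0
  · have hw₀ : 1 ≤ w j₀ := by have := hw j₀; omega
    rw [knockoffProcess_succ_of_mem hj₀]
    refine condExp_mul_le_of_indep (nullFiltration_le hκmeas n) (hκmeas j₀).comap_le
      (stronglyMeasurable_knockoffProcess ..) (knockoffProcess_nonneg _ _ _ _ _ n)
      (stronglyMeasurable_exp_mul_knockoffIncrement ..)
      (indep_comap_biSup_comap_of_iIndepFun hκmeas hindep hj₀ nullsBefore_subset
        notMem_nullsBefore_self) (knockoffProcess_succ_of_mem hj₀ ▸ hint (n + 1)) ?_ ?_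
    · simpa using integrable_exp_mul_sum_knockoffIncrement (μ := μ) hκmeas {j₀} w x θ
    · exact integral_exp_mul_knockoffIncrement_le_one (hκmeas j₀)
        (fun ω => (mem_Icc.1 (hrange j₀ ω)).1) hw₀ (hunif j₀ hj₀ 1 (mem_Icc.2 ⟨le_rfl, hw₀⟩))
        hα.1 hα.2.le hc.le hθpos.ne' (hθle.trans (inf'_le _ hj₀)) hx
  · rw [knockoffProcess_succ_of_notMem hj₀, condExp_of_stronglyMeasurable
      (nullFiltration_le hκmeas n) (stronglyMeasurable_knockoffProcess ..) (hint n)]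

/-- **Supermartingale property of the exponential process.**
Let `θ* = min_{m ∈ H₀} [ ω_m⁻¹ · log(ω_m - (ω_m - 1)·α^c) ]`, let `0 < θ ≤ θ*`,
and `x = -c·log α / θ`. With `Z 0 = 1` and
`Z k = exp( θ · ∑_{j ≤ k, j ∈ H₀} ( ω_j·1{κ_j = 1} - x·1{κ_j > 1} ) )`, and `F k`
the σ-algebra generated by `{κ_j : j ≤ k, j ∈ H₀}`, the process `(Z k)_{k=0}^p`
is a supermartingale: for every `k ∈ {1,…,p}`, `E[Z k | F (k-1)] ≤ Z (k-1)` a.s. -/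
theorem cheap_knockoffs_supermartingale
    {Ω : Type*} [MeasurableSpace Ω] (μ : Measure Ω) [IsProbabilityMeasure μ]
    (p : ℕ) (hp : 0 < p) (w : Fin p → ℕ) (hw : ∀ j, 2 ≤ w j)
    (H0 : Finset (Fin p)) (hH0 : H0.Nonempty)
    (κ : Fin p → Ω → ℕ)
    (hκmeas : ∀ j, Measurable (κ j))
    (hrange : ∀ j ω₀, κ j ω₀ ∈ Finset.Icc 1 (w j))
    (hindep : iIndepFun
      (fun j : H0 => κ j) μ)
    (hunif : ∀ j ∈ H0, ∀ i ∈ Finset.Icc 1 (w j),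
      μ {ω₀ | κ j ω₀ = i} = ENNReal.ofReal (1 / (w j : ℝ)))
    (α c : ℝ) (hα : α ∈ Set.Ioo (0 : ℝ) 1) (hc : 0 < c)
    (θ : ℝ) (hθpos : 0 < θ)
    (hθle : θ ≤ H0.inf' hH0 (fun m =>
      ((w m : ℝ))⁻¹ * Real.log ((w m : ℝ) - ((w m : ℝ) - 1) * α ^ c)))
    (x : ℝ) (hx : x = - c * Real.log α / θ)
    (Z : ℕ → Ω → ℝ)
    (hZ : ∀ k ω₀, Z k ω₀ = Real.exp (θ *
      ∑ j ∈ Finset.univ.filter (fun j : Fin p => (j : ℕ) < k ∧ j ∈ H0),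
        ((w j : ℝ) * (if κ j ω₀ = 1 then 1 else 0)
          - x * (if 1 < κ j ω₀ then 1 else 0))))
    (F : ℕ → MeasurableSpace Ω)
    (hF : ∀ k, F k = ⨆ j ∈ Finset.univ.filter (fun j : Fin p => (j : ℕ) < k ∧ j ∈ H0),
      MeasurableSpace.comap (κ j) inferInstance) :
    ∀ k, 1 ≤ k → k ≤ p → μ[Z k | F (k - 1)] ≤ᵐ[μ] Z (k - 1) :=
  cheap_knockoffs_supermartingale_general μ p w hw H0 hH0 κ hκmeas hrange hindep hunif α c hα hc θ
    hθpos hθle x hx Z hZ F hF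
end

section
/- For each j ∈ H₀, the random variable κ_j is uniformly distributed on {1,…,ω_j} and is independent of the pair consisting of the family (κ_k)_{k ≠ j} and the blockwise order statistics T_ordered. -/
/-!
Let `j` be a null block and `σ` a permutation of its indices. Permuting block `j` of `T` by `σ⁻¹`
does not change the law of `T`; almost surely it moves the argmax of block `j` to `σ (κ j)`, while
the other argmaxes and the blockwise decreasing rearrangement stay the same. Since argmax and
sorting are measurable functions of `T`, the joint law of `κ j` and
`Y = ((κ k)_{k ≠ j}, T_ordered)` is invariant under every permutation of the first coordinate.
A finite measure on `Fin ω_j × _` with this invariance is the product of the uniform law with its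
second marginal, which is exactly uniformity of `κ j` together with independence from `Y`.
-/

open MeasureTheory ProbabilityTheory Equiv

section PermutationInvariant

variable {α β : Type*} [Fintype α] [MeasurableSpace α] [MeasurableSingletonClass α]
  [MeasurableSpace β]

theorem measure_eq_uniformOn_mul_of_measure_singleton_eq {ρ : Measure α}
    (h : ∀ a b, ρ {a} = ρ {b}) (s : Set α) : ρ s = uniformOn Set.univ s * ρ Set.univ := by
  classical
  rcases isEmpty_or_nonempty α with _ | ⟨⟨a⟩⟩
  · simp [Set.eq_empty_of_isEmpty s]
  have hcount : ∀ u : Set α, ρ u = Measure.count u * ρ {a} := fun u => by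
    rw [← u.coe_toFinset, ← sum_measure_singleton, Measure.count_apply_finset,
      Finset.sum_congr rfl fun b _ => h b a, Finset.sum_const, nsmul_eq_mul]
  have hcard : (Fintype.card α : ENNReal) ≠ 0 :=
    Nat.cast_ne_zero.2 (Fintype.card_pos_iff.2 ⟨a⟩).ne'
  rw [hcount s, hcount Set.univ, uniformOn_univ, ← Finset.coe_univ, Measure.count_apply_finset,
    Finset.card_univ, ← mul_assoc,
    ENNReal.div_mul_cancel hcard (ENNReal.natCast_ne_top _)]

theorem eq_uniformOn_prod_map_snd_of_map_prodMap_eq {ν : Measure (α × β)} [IsFiniteMeasure ν]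
    (h : ∀ σ : Perm α, ν.map (Prod.map σ id) = ν) :
    ν = (uniformOn Set.univ).prod (ν.map Prod.snd) := by
  refine (Measure.prod_eq fun s t _ ht => ?_).symm
  set ρ := (ν.restrict (Prod.snd ⁻¹' t)).map Prod.fst
  have hρ : ∀ u, ρ u = ν (u ×ˢ t) := fun u => by
    have hu := (Set.toFinite u).measurableSet
    rw [Measure.map_apply measurable_fst hu, Measure.restrict_apply (measurable_fst hu),
      Set.prod_eq]
  have hsingleton : ∀ a b, ρ {a} = ρ {b} := fun a b => by
    classical
    have hpre : Prod.map (swap a b) id ⁻¹' ({a} ×ˢ t) = {b} ×ˢ t := by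
      ext x
      simp [swap_apply_eq_iff]
    rw [hρ, hρ, ← hpre, ← Measure.map_apply (by fun_prop) ((measurableSet_singleton a).prod ht),
      h]
  rw [← hρ, measure_eq_uniformOn_mul_of_measure_singleton_eq hsingleton, hρ,
    Measure.map_apply measurable_snd ht, Set.univ_prod]

theorem map_eq_uniformOn_and_indepFun_of_identDistrib_perm {Ω : Type*}
    [MeasurableSpace Ω] {μ : Measure Ω} [IsProbabilityMeasure μ] {X : Ω → α} {Y : Ω → β}
    (hX : Measurable X) (hY : Measurable Y)
    (h : ∀ σ : Perm α, IdentDistrib (fun ω => (σ (X ω), Y ω)) (fun ω => (X ω, Y ω)) μ μ) :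
    μ.map X = uniformOn Set.univ ∧ IndepFun X Y μ := by
  have hXY : Measurable fun ω => (X ω, Y ω) := hX.prodMk hY
  set ν := μ.map fun ω => (X ω, Y ω)
  have hprod : ν = (uniformOn Set.univ).prod (μ.map Y) := by
    have hinv : ∀ σ : Perm α, ν.map (Prod.map σ id) = ν := fun σ => by
      rw [Measure.map_map (by fun_prop) hXY]
      exact (h σ).map_eq
    have hsnd : μ.map Y = ν.map Prod.snd := by rw [Measure.map_map measurable_snd hXY]; rfl
    rw [hsnd]
    exact eq_uniformOn_prod_map_snd_of_map_prodMap_eq hinv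
  have hmapX : μ.map X = uniformOn Set.univ := by
    have := Measure.isProbabilityMeasure_map (μ := μ) hY.aemeasurable
    have hfst : μ.map X = ν.map Prod.fst := by rw [Measure.map_map measurable_fst hXY]; rfl
    rw [hfst, hprod, Measure.map_fst_prod, measure_univ, one_smul]
  refine ⟨hmapX, (indepFun_iff_map_prod_eq_prod_map_map hX.aemeasurable hY.aemeasurable).2 ?_⟩
  rwa [hmapX]

end PermutationInvariant

section Sorting

variable {α : Type*} [LinearOrder α] {n : ℕ}

def antitoneSort (t : Fin n → α) : Fin n → α := t ∘ Tuple.sort t ∘ Fin.rev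

def argmax [NeZero n] (t : Fin n → α) : Fin n := Tuple.sort t ⊤

theorem antitone_antitoneSort (t : Fin n → α) : Antitone (antitoneSort t) :=
  (Tuple.monotone_sort t).comp_antitone Fin.rev_anti

theorem antitoneSort_comp_perm (t : Fin n → α) (e : Perm (Fin n)) :
    antitoneSort (t ∘ e) = antitoneSort t := by
  have h₁ : Antitone (t ∘ ⇑(e * Tuple.sort (t ∘ e) * Fin.revPerm : Perm (Fin n))) :=
    antitone_antitoneSort (t ∘ e)
  have h₂ : Antitone (t ∘ ⇑(Tuple.sort t * Fin.revPerm : Perm (Fin n))) := antitone_antitoneSort t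
  exact Tuple.unique_antitone h₁ h₂

theorem eq_antitoneSort_of_antitone {s t : Fin n → α} (e : Perm (Fin n)) (h : s = t ∘ e)
    (hs : Antitone s) : s = antitoneSort t := by
  subst h
  have h₂ : Antitone (t ∘ ⇑(Tuple.sort t * Fin.revPerm : Perm (Fin n))) := antitone_antitoneSort t
  exact Tuple.unique_antitone hs h₂

theorem apply_le_apply_argmax [NeZero n] (t : Fin n → α) (m : Fin n) : t m ≤ t (argmax t) := by
  simpa [argmax] using Tuple.monotone_sort t (le_top (a := (Tuple.sort t).symm m))

theorem argmax_eq_of_injective [NeZero n] {t : Fin n → α} (ht : Function.Injective t) {c : Fin n}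
    (hc : ∀ m, t m ≤ t c) : argmax t = c :=
  ht ((hc _).antisymm (apply_le_apply_argmax t c))

theorem argmax_comp_perm [NeZero n] {t : Fin n → α} (ht : Function.Injective t)
    (e : Perm (Fin n)) : argmax (t ∘ e) = e.symm (argmax t) :=
  argmax_eq_of_injective (ht.comp e.injective) fun m => by
    simpa using apply_le_apply_argmax t (e m)

variable [TopologicalSpace α] [OrderClosedTopology α] [SecondCountableTopology α]
  [MeasurableSpace α] [OpensMeasurableSpace α]

theorem measurableSet_sort_eq (π : Perm (Fin n)) :
    MeasurableSet {t : Fin n → α | Tuple.sort t = π} := by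
  simp_rw [eq_comm (a := Tuple.sort _), Tuple.eq_sort_iff, Monotone]
  exact Measurable.setOf (by fun_prop)

theorem measurable_sort_apply (i : Fin n) : Measurable fun t : Fin n → α => Tuple.sort t i := by
  refine measurable_to_countable' fun a => ?_
  have : (fun t : Fin n → α => Tuple.sort t i) ⁻¹' {a} =
      ⋃ (π : Perm (Fin n)) (_ : π i = a), {t | Tuple.sort t = π} := by
    ext t; simp
  rw [this]
  exact .iUnion fun π => .iUnion fun _ => measurableSet_sort_eq π

@[fun_prop]
theorem measurable_argmax [NeZero n] : Measurable (argmax : (Fin n → α) → Fin n) :=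
  measurable_sort_apply ⊤

@[fun_prop]
theorem measurable_antitoneSort : Measurable (antitoneSort : (Fin n → α) → Fin n → α) := by
  have heval : Measurable fun p : (Fin n → α) × Fin n => p.1 p.2 :=
    measurable_from_prod_countable_left fun i => measurable_pi_apply i
  exact measurable_pi_lambda _ fun ℓ => heval.comp (measurable_id.prodMk (measurable_sort_apply _))

theorem identDistrib_perm_argmax_of_identDistrib_mulSingle {ι Ω : Type*} [DecidableEq ι]
    [MeasurableSpace Ω] {μ : Measure Ω} {w : ι → ℕ} [∀ i, NeZero (w i)]
    {T : Ω → (i : ι) → Fin (w i) → α} {j : ι}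
    (hswap : ∀ σ : Perm (Fin (w j)), IdentDistrib
      (fun ω i ℓ => T ω i (Pi.mulSingle (M := fun i => Perm (Fin (w i))) j σ i ℓ)) T μ μ)
    (hinj : ∀ᵐ ω ∂μ, Function.Injective (T ω j))
    {κ : Ω → (i : ι) → Fin (w i)} (hκmeas : Measurable κ)
    (hκ : ∀ᵐ ω ∂μ, ∀ i, κ ω i = argmax (T ω i))
    {S : Ω → (i : ι) → Fin (w i) → α} (hSmeas : Measurable S)
    (hS : ∀ ω, S ω = fun i => antitoneSort (T ω i)) (σ : Perm (Fin (w j))) :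
    IdentDistrib (fun ω => (σ (κ ω j), (fun k : {k // k ≠ j} => κ ω k), S ω))
      (fun ω => (κ ω j, (fun k : {k // k ≠ j} => κ ω k), S ω)) μ μ := by
  let G (t : (i : ι) → Fin (w i) → α) :=
    (argmax (t j), (fun k : {k // k ≠ j} => argmax (t k), fun i => antitoneSort (t i)))
  have hG : Measurable G := by fun_prop
  have hGT : (fun ω => (κ ω j, (fun k : {k // k ≠ j} => κ ω k), S ω)) =ᵐ[μ] G ∘ T := by
    filter_upwards [hκ] with ω hω
    simp [G, hω, hS]
  set ς : (i : ι) → Perm (Fin (w i)) := Pi.mulSingle j σ⁻¹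
  have hGT' : (fun ω => (σ (κ ω j), (fun k : {k // k ≠ j} => κ ω k), S ω)) =ᵐ[μ]
      G ∘ fun ω i ℓ => T ω i (ς i ℓ) := by
    filter_upwards [hκ, hinj] with ω hω hinj
    have hcomp : ∀ i, (fun ℓ => T ω i (ς i ℓ)) = T ω i ∘ ς i := fun _ => rfl
    simp only [Function.comp_apply, G, hcomp, antitoneSort_comp_perm, ← hS ω]
    refine Prod.ext ?_ (Prod.ext (funext fun k => ?_) rfl)
    · simp [argmax_comp_perm hinj, ς, hω]
    · simp [ς, Pi.mulSingle_eq_of_ne k.2, hω]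
  exact (IdentDistrib.of_ae_eq (by fun_prop) hGT').trans
    (((hswap σ⁻¹).comp hG).trans (IdentDistrib.of_ae_eq (by fun_prop) hGT).symm)

end Sorting

theorem knockoff_statistic_uniform_and_independent_general
    {Ω : Type*} [MeasurableSpace Ω] (μ : Measure Ω) [IsProbabilityMeasure μ]
    (p : ℕ) (w : Fin p → ℕ)
    (H0 : Finset (Fin p))
    (T : Ω → (j : Fin p) → Fin (w j) → ℝ)
    -- (i) null-swap exchangeability of T
    (hswap : ∀ ς : (j : Fin p) → Equiv.Perm (Fin (w j)), (∀ j ∉ H0, ς j = 1) →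
      IdentDistrib (fun ω₀ => fun j ℓ => T ω₀ j (ς j ℓ)) T μ μ)
    -- (ii) a.s. pairwise distinct values within each block
    (hdist : ∀ᵐ ω₀ ∂μ, ∀ j, Function.Injective (fun ℓ => T ω₀ j ℓ))
    -- κ j is the argmax of block j
    (κ : Ω → (j : Fin p) → Fin (w j)) (hκmeas : Measurable κ)
    (hκargmax : ∀ᵐ ω₀ ∂μ, ∀ j ℓ, T ω₀ j ℓ ≤ T ω₀ j (κ ω₀ j))
    -- S is T with each block sorted into decreasing order
    (S : Ω → (j : Fin p) → Fin (w j) → ℝ) (hSmeas : Measurable S)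
    (hS : ∀ ω₀ j, ∃ e : Equiv.Perm (Fin (w j)),
      (∀ ℓ, S ω₀ j ℓ = T ω₀ j (e ℓ)) ∧ Antitone (S ω₀ j)) :
    ∀ j ∈ H0,
      (∀ i : Fin (w j), μ {ω₀ | κ ω₀ j = i} = ENNReal.ofReal (1 / (w j : ℝ))) ∧
      IndepFun (fun ω₀ => κ ω₀ j)
        (fun ω₀ => ((fun k : {k : Fin p // k ≠ j} => κ ω₀ k), S ω₀)) μ := by
  obtain ⟨ω₁⟩ := nonempty_of_isProbabilityMeasure μ
  have : ∀ i, NeZero (w i) := fun i => NeZero.of_pos (κ ω₁ i).pos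
  have hS_eq : ∀ ω, S ω = fun i => antitoneSort (T ω i) := fun ω => funext fun i => by
    obtain ⟨e, he, hanti⟩ := hS ω i
    exact eq_antitoneSort_of_antitone e (funext he) hanti
  have hκ_eq : ∀ᵐ ω ∂μ, ∀ i, κ ω i = argmax (T ω i) := by
    filter_upwards [hdist, hκargmax] with ω hinj hmax i
    exact (argmax_eq_of_injective (hinj i) (hmax i)).symm
  intro j hj
  have hswap_j (σ : Perm (Fin (w j))) := hswap (Pi.mulSingle j σ) fun i hi =>
    Pi.mulSingle_eq_of_ne (M := fun i => Perm (Fin (w i))) (ne_of_mem_of_not_mem hj hi).symm σ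
  obtain ⟨hunif, hindep⟩ := map_eq_uniformOn_and_indepFun_of_identDistrib_perm
    (by fun_prop) (by fun_prop) fun σ => identDistrib_perm_argmax_of_identDistrib_mulSingle
      hswap_j (hdist.mono fun ω h => h j) hκmeas hκ_eq hSmeas hS_eq σ
  refine ⟨fun i => ?_, hindep⟩
  rw [show {ω | κ ω j = i} = (fun ω => κ ω j) ⁻¹' {i} from rfl, ← Measure.map_apply (by fun_prop)
    (measurableSet_singleton i), hunif, uniformOn_univ]
  simp [ENNReal.ofReal_inv_of_pos (Nat.cast_pos.2 (NeZero.pos (w j)))]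

/-- **Lemma 2 (multiple knockoff statistics).**
Under the null-swap exchangeability of the statistics `T` and a.s. distinctness
within blocks, for each `j ∈ H₀` the argmax index `κ_j` is uniformly distributed
on `{1,…,ω_j}` and independent of the pair `((κ_k)_{k ≠ j}, T_ordered)`. -/
theorem knockoff_statistic_uniform_and_independent
    {Ω : Type*} [MeasurableSpace Ω] (μ : Measure Ω) [IsProbabilityMeasure μ]
    (p : ℕ) (w : Fin p → ℕ) (hw : ∀ j, 2 ≤ w j)
    (H0 : Finset (Fin p))
    (T : Ω → (j : Fin p) → Fin (w j) → ℝ) (hTmeas : Measurable T)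
    -- (i) null-swap exchangeability of T
    (hswap : ∀ ς : (j : Fin p) → Equiv.Perm (Fin (w j)), (∀ j ∉ H0, ς j = 1) →
      IdentDistrib (fun ω₀ => fun j ℓ => T ω₀ j (ς j ℓ)) T μ μ)
    -- (ii) a.s. pairwise distinct values within each block
    (hdist : ∀ᵐ ω₀ ∂μ, ∀ j, Function.Injective (fun ℓ => T ω₀ j ℓ))
    -- κ j is the argmax of block j
    (κ : Ω → (j : Fin p) → Fin (w j)) (hκmeas : Measurable κ)
    (hκargmax : ∀ᵐ ω₀ ∂μ, ∀ j ℓ, T ω₀ j ℓ ≤ T ω₀ j (κ ω₀ j))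
    -- S is T with each block sorted into decreasing order
    (S : Ω → (j : Fin p) → Fin (w j) → ℝ) (hSmeas : Measurable S)
    (hS : ∀ ω₀ j, ∃ e : Equiv.Perm (Fin (w j)),
      (∀ ℓ, S ω₀ j ℓ = T ω₀ j (e ℓ)) ∧ Antitone (S ω₀ j)) :
    ∀ j ∈ H0,
      (∀ i : Fin (w j), μ {ω₀ | κ ω₀ j = i} = ENNReal.ofReal (1 / (w j : ℝ))) ∧
      IndepFun (fun ω₀ => κ ω₀ j)
        (fun ω₀ => ((fun k : {k : Fin p // k ≠ j} => κ ω₀ k), S ω₀)) μ :=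
  knockoff_statistic_uniform_and_independent_general μ p w H0 T hswap hdist κ hκmeas hκargmax S
    hSmeas hS
end

section
/- For every null swap ς = (ς_1,…,ς_p), the random tuple ( ς_1(κ_1), …, ς_p(κ_p), T_ordered ) has the same joint distribution as ( κ_1, …, κ_p, T_ordered ). -/
open MeasureTheory ProbabilityTheory

namespace KnockoffAux

open Finset

variable {n : ℕ}

/-- The `ℓ`-th largest value among `x 0, …, x (n-1)`: max over subsets of size `ℓ+1`
of the min over the subset. -/
noncomputable def ordStat (x : Fin n → ℝ) (ℓ : Fin n) : ℝ :=
  (((Finset.univ : Finset (Fin n)).powersetCard ((ℓ : ℕ) + 1)).attach.sup'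
    (Finset.attach_nonempty_iff.mpr (Finset.powersetCard_nonempty.mpr
      (by simpa using Nat.succ_le_of_lt ℓ.2)))
    fun A => A.1.inf' (Finset.card_pos.mp
      (by rw [(Finset.mem_powersetCard.mp A.2).2]; omega)) x)

lemma measurable_finset_inf' {A : Finset (Fin n)} (hA : A.Nonempty) :
    Measurable fun x : Fin n → ℝ => A.inf' hA x := by
  have h : Measurable (A.inf' hA fun a (x : Fin n → ℝ) => x a) :=
    Finset.inf'_induction hA _ (fun f hf g hg => hf.inf hg)
      (fun a _ => measurable_pi_apply a)
  have he : (fun x : Fin n → ℝ => A.inf' hA x)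
      = A.inf' hA fun a (x : Fin n → ℝ) => x a := by
    funext x
    rw [Finset.inf'_apply]
  rwa [he]

lemma measurable_ordStat (ℓ : Fin n) : Measurable fun x : Fin n → ℝ => ordStat x ℓ := by
  unfold ordStat
  have h : Measurable ((((Finset.univ : Finset (Fin n)).powersetCard ((ℓ : ℕ) + 1)).attach.sup'
      (Finset.attach_nonempty_iff.mpr (Finset.powersetCard_nonempty.mpr
        (by simpa using Nat.succ_le_of_lt ℓ.2)))
      fun A (x : Fin n → ℝ) => A.1.inf' (Finset.card_pos.mp
        (by rw [(Finset.mem_powersetCard.mp A.2).2]; omega)) x)) :=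
    Finset.measurable_sup' _ fun A _ => measurable_finset_inf' _
  have he : (fun x : Fin n → ℝ =>
      (((Finset.univ : Finset (Fin n)).powersetCard ((ℓ : ℕ) + 1)).attach.sup'
        (Finset.attach_nonempty_iff.mpr (Finset.powersetCard_nonempty.mpr
          (by simpa using Nat.succ_le_of_lt ℓ.2)))
        fun A => A.1.inf' (Finset.card_pos.mp
          (by rw [(Finset.mem_powersetCard.mp A.2).2]; omega)) x))
      = (((Finset.univ : Finset (Fin n)).powersetCard ((ℓ : ℕ) + 1)).attach.sup'
        (Finset.attach_nonempty_iff.mpr (Finset.powersetCard_nonempty.mpr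
          (by simpa using Nat.succ_le_of_lt ℓ.2)))
        fun A (x : Fin n → ℝ) => A.1.inf' (Finset.card_pos.mp
          (by rw [(Finset.mem_powersetCard.mp A.2).2]; omega)) x) := by
    funext x
    rw [Finset.sup'_apply]
  rwa [he]

lemma ordStat_of_antitone {y : Fin n → ℝ} (hy : Antitone y) (ℓ : Fin n) :
    ordStat y ℓ = y ℓ := by
  unfold ordStat
  apply le_antisymm
  · apply Finset.sup'_le
    rintro ⟨A, hA⟩ -
    obtain ⟨a, haA, ha⟩ : ∃ a ∈ A, ℓ ≤ a := by
      by_contra h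
      push_neg at h
      have hsub : A.image Fin.val ⊆ Finset.range (ℓ : ℕ) := by
        intro m hm
        obtain ⟨a, ha', rfl⟩ := Finset.mem_image.mp hm
        exact Finset.mem_range.mpr (Fin.lt_iff_val_lt_val.mp (h a ha'))
      have hcard := Finset.card_le_card hsub
      rw [Finset.card_image_of_injective _ Fin.val_injective,
        (Finset.mem_powersetCard.mp hA).2, Finset.card_range] at hcard
      omega
    exact le_trans (Finset.inf'_le _ haA) (hy ha)
  · have hmem : Finset.Iic ℓ ∈ (Finset.univ : Finset (Fin n)).powersetCard ((ℓ : ℕ) + 1) := by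
      rw [Finset.mem_powersetCard]
      refine ⟨Finset.subset_univ _, ?_⟩
      simp [Fin.card_Iic]
    refine le_trans ?_ (Finset.le_sup' _ (Finset.mem_attach _ ⟨Finset.Iic ℓ, hmem⟩))
    exact Finset.le_inf' _ _ fun a ha => hy (Finset.mem_Iic.mp ha)

lemma ordStat_comp_le (x : Fin n → ℝ) (σ : Equiv.Perm (Fin n)) (ℓ : Fin n) :
    ordStat (x ∘ σ) ℓ ≤ ordStat x ℓ := by
  apply Finset.sup'_le
  rintro ⟨A, hA⟩ -
  have hmem : A.image σ ∈ (Finset.univ : Finset (Fin n)).powersetCard ((ℓ : ℕ) + 1) := by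
    rw [Finset.mem_powersetCard] at hA ⊢
    exact ⟨Finset.subset_univ _,
      by rw [Finset.card_image_of_injective _ σ.injective, hA.2]⟩
  refine le_trans ?_ (Finset.le_sup' _ (Finset.mem_attach _ ⟨A.image σ, hmem⟩))
  refine Finset.le_inf' _ _ fun b hb => ?_
  obtain ⟨a, ha, rfl⟩ := Finset.mem_image.mp hb
  exact Finset.inf'_le _ ha

lemma ordStat_comp (x : Fin n → ℝ) (σ : Equiv.Perm (Fin n)) (ℓ : Fin n) :
    ordStat (x ∘ σ) ℓ = ordStat x ℓ := by
  refine le_antisymm (ordStat_comp_le x σ ℓ) ?_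
  have := ordStat_comp_le (x ∘ σ) σ⁻¹ ℓ
  have hxx : (x ∘ σ) ∘ ((σ⁻¹ : Equiv.Perm (Fin n)) : Fin n → Fin n) = x := by
    funext m; simp
  rwa [hxx] at this

/-- The (first) argmax of `x`. -/
noncomputable def amax [NeZero n] (x : Fin n → ℝ) : Fin n :=
  (Finset.univ.filter fun ℓ => ∀ m, x m ≤ x ℓ).min' (by
    obtain ⟨a, ha⟩ := Finite.exists_max x
    exact ⟨a, Finset.mem_filter.mpr ⟨Finset.mem_univ _, ha⟩⟩)

lemma amax_spec [NeZero n] (x : Fin n → ℝ) (m : Fin n) : x m ≤ x (amax x) := by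
  have := Finset.min'_mem (Finset.univ.filter fun ℓ => ∀ m, x m ≤ x ℓ) (by
    obtain ⟨a, ha⟩ := Finite.exists_max x
    exact ⟨a, Finset.mem_filter.mpr ⟨Finset.mem_univ _, ha⟩⟩)
  exact (Finset.mem_filter.mp this).2 m

lemma amax_eq_iff [NeZero n] (x : Fin n → ℝ) (ℓ : Fin n) :
    amax x = ℓ ↔ (∀ m, x m ≤ x ℓ) ∧ ∀ m, (∀ k, x k ≤ x m) → ℓ ≤ m := by
  constructor
  · rintro rfl
    refine ⟨amax_spec x, fun m hm => ?_⟩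
    exact Finset.min'_le _ _ (Finset.mem_filter.mpr ⟨Finset.mem_univ _, hm⟩)
  · rintro ⟨h1, h2⟩
    refine le_antisymm (Finset.min'_le _ _ (Finset.mem_filter.mpr ⟨Finset.mem_univ _, h1⟩)) ?_
    have := Finset.min'_mem (Finset.univ.filter fun ℓ => ∀ m, x m ≤ x ℓ) (by
      obtain ⟨a, ha⟩ := Finite.exists_max x
      exact ⟨a, Finset.mem_filter.mpr ⟨Finset.mem_univ _, ha⟩⟩)
    exact h2 _ (Finset.mem_filter.mp this).2

lemma measurable_amax [NeZero n] : Measurable (amax (n := n)) := by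
  apply measurable_to_countable'
  intro ℓ
  have hset : amax ⁻¹' {ℓ} =
      (⋂ m, {x : Fin n → ℝ | x m ≤ x ℓ}) ∩
        ⋂ m, {x : Fin n → ℝ | (∀ k, x k ≤ x m) → ℓ ≤ m} := by
    ext x
    simp only [Set.mem_preimage, Set.mem_singleton_iff, Set.mem_inter_iff, Set.mem_iInter,
      Set.mem_setOf_eq, amax_eq_iff]
  rw [hset]
  refine MeasurableSet.inter (MeasurableSet.iInter fun m =>
      measurableSet_le (measurable_pi_apply m) (measurable_pi_apply ℓ))
    (MeasurableSet.iInter fun m => ?_)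
  by_cases hm : ℓ ≤ m
  · simp only [hm, implies_true, Set.setOf_true]
    exact MeasurableSet.univ
  · have : {x : Fin n → ℝ | (∀ k, x k ≤ x m) → ℓ ≤ m}
        = (⋂ k, {x : Fin n → ℝ | x k ≤ x m})ᶜ := by
      ext x
      simp [hm]
    rw [this]
    exact (MeasurableSet.iInter fun k =>
      measurableSet_le (measurable_pi_apply k) (measurable_pi_apply m)).compl

lemma amax_comp [NeZero n] {x : Fin n → ℝ} (hx : Function.Injective x)
    {k : Fin n} (hk : ∀ m, x m ≤ x k) (σ : Equiv.Perm (Fin n)) :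
    amax (x ∘ σ) = σ⁻¹ k := by
  have h1 : ∀ m, (x ∘ σ) m ≤ (x ∘ σ) (amax (x ∘ σ)) := amax_spec _
  have h2 : ∀ m, x m ≤ x (σ (amax (x ∘ σ))) := fun m => by
    simpa using h1 (σ⁻¹ m)
  have hsk : σ (amax (x ∘ σ)) = k := hx (le_antisymm (hk _) (h2 k))
  rw [← hsk]; simp

end KnockoffAux

open KnockoffAux

/-- **Joint swap-invariance of the knockoff statistics and order statistics.**
For every null swap `ς`, the tuple `(ς_1(κ_1), …, ς_p(κ_p), T_ordered)` has the
same joint distribution as `(κ_1, …, κ_p, T_ordered)`. -/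
theorem knockoff_statistics_joint_swap_invariance
    {Ω : Type*} [MeasurableSpace Ω] (μ : Measure Ω) [IsProbabilityMeasure μ]
    (p : ℕ) (w : Fin p → ℕ) (hw : ∀ j, 2 ≤ w j)
    (H0 : Finset (Fin p))
    (T : Ω → (j : Fin p) → Fin (w j) → ℝ) (hTmeas : Measurable T)
    -- (i) null-swap exchangeability of T
    (hswap : ∀ ς : (j : Fin p) → Equiv.Perm (Fin (w j)), (∀ j ∉ H0, ς j = 1) →
      IdentDistrib (fun ω₀ => fun j ℓ => T ω₀ j (ς j ℓ)) T μ μ)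
    -- (ii) a.s. pairwise distinct values within each block
    (hdist : ∀ᵐ ω₀ ∂μ, ∀ j, Function.Injective (fun ℓ => T ω₀ j ℓ))
    -- κ j is the argmax of block j
    (κ : Ω → (j : Fin p) → Fin (w j)) (hκmeas : Measurable κ)
    (hκargmax : ∀ᵐ ω₀ ∂μ, ∀ j ℓ, T ω₀ j ℓ ≤ T ω₀ j (κ ω₀ j))
    -- S is T with each block sorted into decreasing order
    (S : Ω → (j : Fin p) → Fin (w j) → ℝ) (hSmeas : Measurable S)
    (hS : ∀ ω₀ j, ∃ e : Equiv.Perm (Fin (w j)),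
      (∀ ℓ, S ω₀ j ℓ = T ω₀ j (e ℓ)) ∧ Antitone (S ω₀ j)) :
    ∀ ς : (j : Fin p) → Equiv.Perm (Fin (w j)), (∀ j ∉ H0, ς j = 1) →
      IdentDistrib (fun ω₀ => ((fun j => ς j (κ ω₀ j)), S ω₀))
        (fun ω₀ => (κ ω₀, S ω₀)) μ μ := by
  intro ς hς
  have inst : ∀ j, NeZero (w j) := fun j => ⟨by have := hw j; omega⟩
  -- the measurable "argmax and sort" map
  set F : ((j : Fin p) → Fin (w j) → ℝ) →
      (((j : Fin p) → Fin (w j)) × ((j : Fin p) → Fin (w j) → ℝ)) :=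
    fun x => (fun j => @amax (w j) (inst j) (x j), fun j ℓ => ordStat (x j) ℓ) with hFdef
  have hFmeas : Measurable F := by
    refine Measurable.prodMk ?_ ?_
    · exact measurable_pi_lambda _ fun j =>
        (@measurable_amax (w j) (inst j)).comp (measurable_pi_apply j)
    · exact measurable_pi_lambda _ fun j => measurable_pi_lambda _ fun ℓ =>
        (measurable_ordStat ℓ).comp (measurable_pi_apply j)
  have hς' : ∀ j ∉ H0, (fun j => (ς j)⁻¹) j = 1 := fun j hj => by
    show (ς j)⁻¹ = 1
    rw [hς j hj]; simp
  have h1 : IdentDistrib (F ∘ fun ω₀ => fun j ℓ => T ω₀ j ((ς j)⁻¹ ℓ)) (F ∘ T) μ μ :=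
    (hswap (fun j => (ς j)⁻¹) hς').comp hFmeas
  -- ordStat recovers S (everywhere)
  have hOrd : ∀ ω₀ j ℓ, ordStat (T ω₀ j) ℓ = S ω₀ j ℓ := by
    intro ω₀ j ℓ
    obtain ⟨e, he, hanti⟩ := hS ω₀ j
    have hcomp : (T ω₀ j) ∘ e = S ω₀ j := by
      funext m; exact (he m).symm
    rw [← ordStat_comp (T ω₀ j) e ℓ, hcomp, ordStat_of_antitone hanti]
  -- a.e. identification of the left composition
  have hL : (fun ω₀ => ((fun j => ς j (κ ω₀ j)), S ω₀))
      =ᵐ[μ] (F ∘ fun ω₀ => fun j ℓ => T ω₀ j ((ς j)⁻¹ ℓ)) := by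
    filter_upwards [hdist.and hκargmax] with ω₀ hh
    obtain ⟨hinj, hmax⟩ := hh
    simp only [Function.comp, hFdef]
    refine Prod.ext ?_ ?_
    · funext j
      have h := @amax_comp (w j) (inst j) (T ω₀ j) (hinj j) _ (hmax j) ((ς j)⁻¹)
      rw [inv_inv] at h
      exact h.symm
    · funext j ℓ
      exact ((hOrd ω₀ j ℓ).symm.trans
        (ordStat_comp (T ω₀ j) ((ς j)⁻¹) ℓ).symm : _)
  -- a.e. identification of the right composition
  have hR : (F ∘ T) =ᵐ[μ] (fun ω₀ => (κ ω₀, S ω₀)) := by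
    filter_upwards [hdist.and hκargmax] with ω₀ hh
    obtain ⟨hinj, hmax⟩ := hh
    simp only [Function.comp, hFdef]
    refine Prod.ext ?_ ?_
    · funext j
      have := @amax_comp (w j) (inst j) _ (hinj j) _ (hmax j) 1
      simpa using this
    · funext j ℓ
      exact hOrd ω₀ j ℓ
  have hLmeas : Measurable (fun ω₀ => ((fun j => ς j (κ ω₀ j)), S ω₀)) := by
    refine Measurable.prodMk ?_ hSmeas
    exact measurable_pi_lambda _ fun j =>
      (Measurable.of_discrete (f := fun k => ς j k)).comp ((measurable_pi_apply j).comp hκmeas)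
  exact ((IdentDistrib.of_ae_eq hLmeas.aemeasurable hL).trans h1).trans
    (IdentDistrib.of_ae_eq (hFmeas.comp hTmeas).aemeasurable hR)
end

section
/- For each j ∈ H₀ and each i ∈ {1,…,ω_j}, the conditional probability of {κ_j = i} given the σ-algebra generated by the family (κ_k)_{k ≠ j} together with T_ordered equals 1/ω_j almost surely. -/
/-!
Permuting the entries of a null block `j` by `σ` leaves the law of `T` unchanged, sends the
block's argmax `κ_j` to `σ⁻¹ κ_j`, and changes neither the other argmaxes nor any sorted block.
So the joint law of `(κ_j, (κ_k)_{k ≠ j}, T_ordered)` is invariant under every permutation of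
the value of `κ_j`, which forces `κ_j` to be uniform given the other two components. To move the
distributional identity from `T` to these statistics, `(κ, T_ordered)` is written almost surely
as a measurable function of `T`: a fixed-tie-break argmax and the min-max order statistics.
-/

open MeasureTheory ProbabilityTheory Finset

section OrderStatistics

lemma Finset.nonempty_of_mem_powersetCard_succ {β : Type*} {s A : Finset β} {m : ℕ}
    (hA : A ∈ s.powersetCard (m + 1)) : A.Nonempty :=
  card_pos.mp (by rw [(mem_powersetCard.mp hA).2]; omega)

variable {α : Type*} [LinearOrder α] {n : ℕ}

/-- The `k`-th largest entry of `x`, counting from `k = 0`, in its min-max form: the largest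
value that is exceeded or attained by at least `k + 1` entries. -/
noncomputable def ordStat (x : Fin n → α) (k : Fin n) : α :=
  (univ.powersetCard (k.val + 1)).attach.sup'
    (attach_nonempty_iff.mpr (powersetCard_nonempty.mpr (by simp)))
    fun A => A.1.inf' (nonempty_of_mem_powersetCard_succ A.2) x

lemma le_ordStat {x : Fin n → α} {k : Fin n} {A : Finset (Fin n)}
    (hA : A ∈ univ.powersetCard (k.val + 1)) :
    A.inf' (nonempty_of_mem_powersetCard_succ hA) x ≤ ordStat x k :=
  le_sup' (fun B : {B // B ∈ univ.powersetCard (k.val + 1)} => B.1.inf' _ x)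
    (mem_attach _ ⟨A, hA⟩)

lemma ordStat_le {x : Fin n → α} {k : Fin n} {a : α}
    (h : ∀ A (hA : A ∈ univ.powersetCard (k.val + 1)),
      A.inf' (nonempty_of_mem_powersetCard_succ hA) x ≤ a) :
    ordStat x k ≤ a :=
  sup'_le _ _ fun A _ => h A.1 A.2

lemma ordStat_comp_perm_le (x : Fin n → α) (e : Equiv.Perm (Fin n)) (k : Fin n) :
    ordStat (x ∘ e) k ≤ ordStat x k := by
  refine ordStat_le fun A hA => ?_
  have hAe : A.map e.toEmbedding ∈ univ.powersetCard (k.val + 1) := by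
    simpa [mem_powersetCard] using hA
  exact le_of_eq_of_le (by simp [inf'_map]) (le_ordStat hAe)

lemma ordStat_comp_perm (x : Fin n → α) (e : Equiv.Perm (Fin n)) :
    ordStat (x ∘ e) = ordStat x := by
  funext k
  refine le_antisymm (ordStat_comp_perm_le x e k) ?_
  simpa [Function.comp_assoc] using ordStat_comp_perm_le (x ∘ e) e⁻¹ k

lemma ordStat_of_antitone {y : Fin n → α} (hy : Antitone y) : ordStat y = y := by
  funext k
  apply le_antisymm
  · refine ordStat_le fun A hA => ?_
    have hne := nonempty_of_mem_powersetCard_succ hA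
    have hk : k ≤ A.max' hne := by
      have hsub : A ⊆ Iic (A.max' hne) := fun a ha => Finset.mem_Iic.mpr (A.le_max' a ha)
      have := card_le_card hsub
      rw [Fin.card_Iic, (mem_powersetCard.mp hA).2] at this
      exact Fin.le_def.mpr (by omega)
    exact (inf'_le _ (A.max'_mem hne)).trans (hy hk)
  · have hIic : Iic k ∈ univ.powersetCard (k.val + 1) := by simp [mem_powersetCard]
    exact (le_inf' _ _ fun i hi => hy (Finset.mem_Iic.mp hi)).trans (le_ordStat hIic)

lemma ordStat_eq_of_perm_of_antitone {x y : Fin n → α} (e : Equiv.Perm (Fin n))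
    (hxy : ∀ ℓ, y ℓ = x (e ℓ)) (hy : Antitone y) : ordStat x = y := by
  rw [← ordStat_comp_perm x e, show x ∘ e = y from funext fun ℓ => (hxy ℓ).symm,
    ordStat_of_antitone hy]

lemma measurable_ordStat [MeasurableSpace α] [MeasurableSup₂ α] [MeasurableInf₂ α] :
    Measurable (ordStat : (Fin n → α) → Fin n → α) := by
  refine measurable_pi_lambda _ fun k => ?_
  simp only [ordStat, ← Finset.sup'_apply]
  refine Finset.measurable_sup' _ fun ⟨A, hA⟩ _ => ?_
  have hne := nonempty_of_mem_powersetCard_succ hA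
  have hcoord : A.inf' hne (fun i (x : Fin n → α) => x i) = fun x => A.inf' hne x :=
    funext fun x => Finset.inf'_apply hne _ x
  change Measurable fun x => A.inf' hne x
  rw [← hcoord]
  exact inf'_induction hne _ (p := Measurable) (fun _ hf _ hg => hf.inf hg)
    fun i _ => measurable_pi_apply i

end OrderStatistics

section Argmax

variable {α : Type*} [LinearOrder α] {n : ℕ} [NeZero n]

lemma nonempty_filter_forall_le (x : Fin n → α) :
    (univ.filter fun i => ∀ ℓ, x ℓ ≤ x i).Nonempty := by
  obtain ⟨i, hi⟩ := Finite.exists_max x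
  exact ⟨i, by simpa using hi⟩

/-- Ties go to the largest index; any measurable rule would do, as blocks are a.s. injective. -/
noncomputable def lastArgmax (x : Fin n → α) : Fin n :=
  (univ.filter fun i => ∀ ℓ, x ℓ ≤ x i).max' (nonempty_filter_forall_le x)

lemma lastArgmax_eq_iff {x : Fin n → α} {i : Fin n} :
    lastArgmax x = i ↔ (∀ ℓ, x ℓ ≤ x i) ∧ ∀ i', (∀ ℓ, x ℓ ≤ x i') → i' ≤ i := by
  simp [lastArgmax, max'_eq_iff]

lemma apply_le_apply_lastArgmax (x : Fin n → α) (ℓ : Fin n) : x ℓ ≤ x (lastArgmax x) :=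
  (lastArgmax_eq_iff.mp rfl).1 ℓ

lemma lastArgmax_eq_of_injective {x : Fin n → α} (hx : Function.Injective x) {i : Fin n}
    (hi : ∀ ℓ, x ℓ ≤ x i) : lastArgmax x = i :=
  hx (le_antisymm (hi _) (apply_le_apply_lastArgmax x i))

lemma lastArgmax_comp_perm {x : Fin n → α} (hx : Function.Injective x)
    (e : Equiv.Perm (Fin n)) : lastArgmax (x ∘ e) = e⁻¹ (lastArgmax x) :=
  lastArgmax_eq_of_injective (hx.comp e.injective) fun ℓ => by
    simpa using apply_le_apply_lastArgmax x (e ℓ)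

lemma measurable_lastArgmax [MeasurableSpace α] [TopologicalSpace α] [OpensMeasurableSpace α]
    [OrderClosedTopology α] [SecondCountableTopology α] :
    Measurable (lastArgmax : (Fin n → α) → Fin n) := by
  refine measurable_to_countable' fun i => ?_
  simp only [Set.preimage, Set.mem_singleton_iff, lastArgmax_eq_iff]
  exact measurableSet_setOfPred.2 (by fun_prop)

end Argmax

section Blocks

variable {ι α : Type*} {w : ι → ℕ} [∀ k, NeZero (w k)] [LinearOrder α]

noncomputable def argmaxSorted (t : ∀ k, Fin (w k) → α) :
    (∀ k, Fin (w k)) × (∀ k, Fin (w k) → α) :=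
  (fun k => lastArgmax (t k), fun k => ordStat (t k))

lemma argmaxSorted_blockPerm {t : ∀ k, Fin (w k) → α} (ht : ∀ k, Function.Injective (t k))
    (ς : ∀ k, Equiv.Perm (Fin (w k))) :
    argmaxSorted (fun k ℓ => t k (ς k ℓ)) =
      (fun k => (ς k)⁻¹ ((argmaxSorted t).1 k), (argmaxSorted t).2) := by
  ext k : 2
  · exact lastArgmax_comp_perm (ht k) (ς k)
  · exact ordStat_comp_perm (t k) (ς k)

lemma argmaxSorted_eq {t : ∀ k, Fin (w k) → α} (ht : ∀ k, Function.Injective (t k))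
    {c : ∀ k, Fin (w k)} (hc : ∀ k ℓ, t k ℓ ≤ t k (c k)) {s : ∀ k, Fin (w k) → α}
    (hs : ∀ k, ∃ e : Equiv.Perm (Fin (w k)), (∀ ℓ, s k ℓ = t k (e ℓ)) ∧ Antitone (s k)) :
    argmaxSorted t = (c, s) := by
  ext k : 2
  · exact lastArgmax_eq_of_injective (ht k) (hc k)
  · obtain ⟨e, hse, hanti⟩ := hs k
    exact ordStat_eq_of_perm_of_antitone e hse hanti

lemma measurable_argmaxSorted [MeasurableSpace α] [TopologicalSpace α] [OpensMeasurableSpace α]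
    [OrderClosedTopology α] [SecondCountableTopology α] [MeasurableSup₂ α] [MeasurableInf₂ α] :
    Measurable (argmaxSorted : (∀ k, Fin (w k) → α) → _) :=
  (measurable_pi_lambda _ fun k => measurable_lastArgmax.comp (measurable_pi_apply k)).prodMk
    (measurable_pi_lambda _ fun k => measurable_ordStat.comp (measurable_pi_apply k))

end Blocks

section Exchangeability

variable {Ω ι α : Type*} [MeasurableSpace Ω] {μ : Measure Ω} {w : ι → ℕ} [∀ k, NeZero (w k)]
  [LinearOrder α] [MeasurableSpace α] [TopologicalSpace α] [OpensMeasurableSpace α]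
  [OrderClosedTopology α] [SecondCountableTopology α] [MeasurableSup₂ α] [MeasurableInf₂ α]

lemma identDistrib_blockPerm_argmaxSorted {T : Ω → ∀ k, Fin (w k) → α}
    {W : Ω → (∀ k, Fin (w k)) × (∀ k, Fin (w k) → α)} {ς : ∀ k, Equiv.Perm (Fin (w k))}
    (hς : IdentDistrib (fun ω k ℓ => T ω k (ς k ℓ)) T μ μ)
    (hinj : ∀ᵐ ω ∂μ, ∀ k, Function.Injective (T ω k))
    (hW : ∀ᵐ ω ∂μ, argmaxSorted (T ω) = W ω) :
    IdentDistrib (fun ω => (fun k => (ς k)⁻¹ ((W ω).1 k), (W ω).2)) W μ μ := by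
  have hperm : (fun ω => argmaxSorted fun k ℓ => T ω k (ς k ℓ)) =ᵐ[μ]
      fun ω => (fun k => (ς k)⁻¹ ((W ω).1 k), (W ω).2) := by
    filter_upwards [hinj, hW] with ω hω hWω
    rw [argmaxSorted_blockPerm hω, hWω]
  exact (IdentDistrib.of_ae_eq (measurable_argmaxSorted.comp_aemeasurable hς.aemeasurable_fst)
    hperm).symm.trans <| (hς.comp measurable_argmaxSorted).trans <|
      IdentDistrib.of_ae_eq (measurable_argmaxSorted.comp_aemeasurable hς.aemeasurable_snd) hW

end Exchangeability

section ConditionalUniform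

variable {Ω ι β : Type*} [MeasurableSpace Ω] {μ : Measure Ω} [MeasurableSpace ι]
  [MeasurableSingletonClass ι] [MeasurableSpace β] {Y : Ω → ι} {V : Ω → β}

lemma measure_inter_preimage_eq_of_identDistrib_perm
    (hperm : ∀ σ : Equiv.Perm ι,
      IdentDistrib (fun ω => (σ (Y ω), V ω)) (fun ω => (Y ω, V ω)) μ μ)
    {B : Set β} (hB : MeasurableSet B) (i i' : ι) :
    μ ({ω | Y ω = i} ∩ V ⁻¹' B) = μ ({ω | Y ω = i'} ∩ V ⁻¹' B) := by
  classical
  have h := (hperm (Equiv.swap i i')).measure_mem_eq ((measurableSet_singleton i').prod hB)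
  simpa [Set.preimage, Set.ofPred_and, Equiv.swap_apply_eq_iff] using h

lemma measure_preimage_eq_card_mul_of_identDistrib_perm [Fintype ι] (hY : Measurable Y)
    (hperm : ∀ σ : Equiv.Perm ι,
      IdentDistrib (fun ω => (σ (Y ω), V ω)) (fun ω => (Y ω, V ω)) μ μ)
    {B : Set β} (hB : MeasurableSet B) (i : ι) :
    μ (V ⁻¹' B) = Fintype.card ι * μ ({ω | Y ω = i} ∩ V ⁻¹' B) := by
  have h := sum_measure_preimage_singleton (μ := μ.restrict (V ⁻¹' B)) univ
    fun i' _ => hY (measurableSet_singleton i')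
  simp only [coe_univ, Set.preimage_univ, Measure.restrict_apply_univ] at h
  rw [← h, sum_congr rfl fun i' _ => ?_, sum_const, card_univ, nsmul_eq_mul]
  rw [Measure.restrict_apply (hY (measurableSet_singleton i'))]
  exact measure_inter_preimage_eq_of_identDistrib_perm hperm hB i' i

theorem condExp_indicator_eq_inv_card_of_identDistrib_perm [Fintype ι] [IsFiniteMeasure μ]
    (hY : Measurable Y) (hV : Measurable V)
    (hperm : ∀ σ : Equiv.Perm ι,
      IdentDistrib (fun ω => (σ (Y ω), V ω)) (fun ω => (Y ω, V ω)) μ μ) (i : ι) :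
    μ[{ω | Y ω = i}.indicator (fun _ => (1 : ℝ)) | MeasurableSpace.comap V inferInstance]
      =ᵐ[μ] fun _ => 1 / (Fintype.card ι : ℝ) := by
  have hYi : MeasurableSet {ω | Y ω = i} := hY (measurableSet_singleton i)
  refine (ae_eq_condExp_of_forall_setIntegral_eq hV.comap_le
    ((integrable_const 1).indicator hYi) (fun _ _ _ => integrableOn_const) ?_
    aestronglyMeasurable_const).symm
  rintro _ ⟨B, hB, rfl⟩ -
  rw [setIntegral_const, setIntegral_indicator hYi, setIntegral_const, smul_eq_mul, smul_eq_mul,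
    measureReal_def, measureReal_def,
    measure_preimage_eq_card_mul_of_identDistrib_perm hY hperm hB i, Set.inter_comm]
  have : Nonempty ι := ⟨i⟩
  rw [ENNReal.toReal_mul, ENNReal.toReal_natCast]
  field_simp

end ConditionalUniform

theorem knockoff_statistic_uniform_conditional_general
    {Ω : Type*} [MeasurableSpace Ω] (μ : Measure Ω) [IsProbabilityMeasure μ]
    (p : ℕ) (w : Fin p → ℕ) (hw : ∀ j, 2 ≤ w j)
    (H0 : Finset (Fin p))
    (T : Ω → (j : Fin p) → Fin (w j) → ℝ)
    -- (i) null-swap exchangeability of T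
    (hswap : ∀ ς : (j : Fin p) → Equiv.Perm (Fin (w j)), (∀ j ∉ H0, ς j = 1) →
      IdentDistrib (fun ω₀ => fun j ℓ => T ω₀ j (ς j ℓ)) T μ μ)
    -- (ii) a.s. pairwise distinct values within each block
    (hdist : ∀ᵐ ω₀ ∂μ, ∀ j, Function.Injective (fun ℓ => T ω₀ j ℓ))
    -- κ j is the argmax of block j
    (κ : Ω → (j : Fin p) → Fin (w j)) (hκmeas : Measurable κ)
    (hκargmax : ∀ᵐ ω₀ ∂μ, ∀ j ℓ, T ω₀ j ℓ ≤ T ω₀ j (κ ω₀ j))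
    -- S is T with each block sorted into decreasing order
    (S : Ω → (j : Fin p) → Fin (w j) → ℝ) (hSmeas : Measurable S)
    (hS : ∀ ω₀ j, ∃ e : Equiv.Perm (Fin (w j)),
      (∀ ℓ, S ω₀ j ℓ = T ω₀ j (e ℓ)) ∧ Antitone (S ω₀ j)) :
    ∀ j ∈ H0, ∀ i : Fin (w j),
      μ[Set.indicator {ω₀ | κ ω₀ j = i} (fun _ => (1 : ℝ)) |
          MeasurableSpace.comap
            (fun ω₀ => ((fun k : {k : Fin p // k ≠ j} => κ ω₀ k), S ω₀)) inferInstance]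
        =ᵐ[μ] fun _ => 1 / (w j : ℝ) := by
  intro j hj i
  have : ∀ k, NeZero (w k) := fun k => ⟨by have := hw k; omega⟩
  have hW : ∀ᵐ ω ∂μ, argmaxSorted (T ω) = (κ ω, S ω) := by
    filter_upwards [hdist, hκargmax] with ω hinj hmax using argmaxSorted_eq hinj hmax (hS ω)
  set V := fun ω => ((fun k : {k : Fin p // k ≠ j} => κ ω k), S ω)
  have hV : Measurable V := by fun_prop
  have hperm : ∀ σ : Equiv.Perm (Fin (w j)),
      IdentDistrib (fun ω => (σ (κ ω j), V ω)) (fun ω => (κ ω j, V ω)) μ μ := by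
    intro σ
    obtain ⟨ς, hςj, hςk⟩ : ∃ ς : ∀ k, Equiv.Perm (Fin (w k)),
        ς j = σ⁻¹ ∧ ∀ k : {k : Fin p // k ≠ j}, ς k = 1 :=
      ⟨Function.update 1 j σ⁻¹, Function.update_self .., fun k => Function.update_of_ne k.2 ..⟩
    have hς := hswap ς fun k hk => hςk ⟨k, by rintro rfl; exact hk hj⟩
    have hproj : Measurable fun c : (∀ k, Fin (w k)) × (∀ k, Fin (w k) → ℝ) =>
        (c.1 j, (fun k : {k : Fin p // k ≠ j} => c.1 k), c.2) := by fun_prop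
    convert (identDistrib_blockPerm_argmaxSorted hς hdist hW).comp hproj using 1
    · funext ω
      simp [V, hςj, hςk, Equiv.Perm.inv_def, Equiv.Perm.one_def]
    · rfl
  simpa only [Fintype.card_fin] using
    condExp_indicator_eq_inv_card_of_identDistrib_perm (by fun_prop) hV hperm i

/-- **Conditional distribution of the argmax index.**
For each `j ∈ H₀` and each index `i` of block `j`, the conditional probability
of `{κ_j = i}` given the σ-algebra generated by `(κ_k)_{k ≠ j}` together with
`T_ordered` equals `1/ω_j` almost surely. -/
theorem knockoff_statistic_uniform_conditional
    {Ω : Type*} [MeasurableSpace Ω] (μ : Measure Ω) [IsProbabilityMeasure μ]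
    (p : ℕ) (w : Fin p → ℕ) (hw : ∀ j, 2 ≤ w j)
    (H0 : Finset (Fin p))
    (T : Ω → (j : Fin p) → Fin (w j) → ℝ) (hTmeas : Measurable T)
    -- (i) null-swap exchangeability of T
    (hswap : ∀ ς : (j : Fin p) → Equiv.Perm (Fin (w j)), (∀ j ∉ H0, ς j = 1) →
      IdentDistrib (fun ω₀ => fun j ℓ => T ω₀ j (ς j ℓ)) T μ μ)
    -- (ii) a.s. pairwise distinct values within each block
    (hdist : ∀ᵐ ω₀ ∂μ, ∀ j, Function.Injective (fun ℓ => T ω₀ j ℓ))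
    -- κ j is the argmax of block j
    (κ : Ω → (j : Fin p) → Fin (w j)) (hκmeas : Measurable κ)
    (hκargmax : ∀ᵐ ω₀ ∂μ, ∀ j ℓ, T ω₀ j ℓ ≤ T ω₀ j (κ ω₀ j))
    -- S is T with each block sorted into decreasing order
    (S : Ω → (j : Fin p) → Fin (w j) → ℝ) (hSmeas : Measurable S)
    (hS : ∀ ω₀ j, ∃ e : Equiv.Perm (Fin (w j)),
      (∀ ℓ, S ω₀ j ℓ = T ω₀ j (e ℓ)) ∧ Antitone (S ω₀ j)) :
    ∀ j ∈ H0, ∀ i : Fin (w j),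
      μ[Set.indicator {ω₀ | κ ω₀ j = i} (fun _ => (1 : ℝ)) |
          MeasurableSpace.comap
            (fun ω₀ => ((fun k : {k : Fin p // k ≠ j} => κ ω₀ k), S ω₀)) inferInstance]
        =ᵐ[μ] fun _ => 1 / (w j : ℝ) :=
  knockoff_statistic_uniform_conditional_general μ p w hw H0 T hswap hdist κ hκmeas hκargmax S
    hSmeas hS
end

section
/- Suppose Z̃ is a valid ω-knockoff of X. Let ς = (ς_1,…,ς_p) be any tuple of permutations such that ς_j is the identity for every j ∉ H₀ and ς_j is an arbitrary permutation of {1,…,ω_j} for j ∈ H₀. Then the pair (Z_swap(ς), Y) has the same joint distribution as (Z, Y). -/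
/-!
Fix a null index `j` and write `X₋ⱼ` for the other features. Conditional independence of the
knockoffs and `Y` given `X` says that `Y` depends on `Z` only through `X`; nullity of `j` says that
it depends on `X` only through `X₋ⱼ`. Hence the joint law of `(Z, Y)` is `law Z ⊗ κ(X₋ⱼ)`, where
`κ` is the conditional law of `Y` given `X₋ⱼ`. Permuting block `j` alone preserves `law Z` and
does not move `X₋ⱼ`, so it preserves the law of `(Z, Y)`. The block permutations preserving that
law form a monoid, and `ς` is the product of its single-block components, each of which is the
identity or lives on a null block.
-/

open MeasureTheory ProbabilityTheory

namespace ProbabilityTheory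

section JointLaw

variable {Ω E E' γ β : Type*} {mΩ : MeasurableSpace Ω} {mE : MeasurableSpace E}
  {mE' : MeasurableSpace E'} {mγ : MeasurableSpace γ} {mβ : MeasurableSpace β}

lemma _root_.MeasureTheory.Measure.map_left_compProd {ν : Measure E} [SFinite ν] {φ : E → E'}
    (hφ : Measurable φ) (η : Kernel E' β) [IsSFiniteKernel η] :
    ν.map φ ⊗ₘ η = (ν ⊗ₘ η.comap φ hφ).map (Prod.map φ id) := by
  ext s hs
  rw [Measure.compProd_apply hs, Measure.map_apply (hφ.prodMap measurable_id) hs,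
    Measure.compProd_apply (hs.preimage (hφ.prodMap measurable_id)),
    lintegral_map (Kernel.measurable_kernel_prodMk_left hs) hφ]
  rfl

variable {μ : Measure Ω} {W : Ω → E} {Y : Ω → β}

lemma map_prodMk_comp_eq_compProd {φ : E → E'} (hφ : Measurable φ) (hW : Measurable W)
    (hY : Measurable Y) [SFinite μ] {η : Kernel E' β} [IsSFiniteKernel η]
    (h : μ.map (fun ω ↦ (W ω, Y ω)) = μ.map W ⊗ₘ η.comap φ hφ) :
    μ.map (fun ω ↦ (φ (W ω), Y ω)) = μ.map (fun ω ↦ φ (W ω)) ⊗ₘ η := by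
  change _ = μ.map (φ ∘ W) ⊗ₘ η
  rw [← Measure.map_map hφ hW, Measure.map_left_compProd hφ, ← h,
    Measure.map_map (hφ.prodMap measurable_id) (hW.prodMk hY)]
  rfl

lemma map_prodMk_eq_compProd_comap_of_comp [IsFiniteMeasure μ] {g : E → γ} (hg : Measurable g)
    (hW : Measurable W) (hY : Measurable Y) {κ κ' : Kernel γ β} [IsFiniteKernel κ]
    [IsFiniteKernel κ'] [MeasurableSpace.CountableOrCountablyGenerated γ β]
    (h : μ.map (fun ω ↦ (W ω, Y ω)) = μ.map W ⊗ₘ κ.comap g hg)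
    (h' : μ.map (fun ω ↦ (g (W ω), Y ω)) = μ.map (fun ω ↦ g (W ω)) ⊗ₘ κ') :
    μ.map (fun ω ↦ (W ω, Y ω)) = μ.map W ⊗ₘ κ'.comap g hg := by
  have hκ : κ =ᵐ[μ.map (g ∘ W)] κ' :=
    Kernel.ae_eq_of_compProd_eq ((map_prodMk_comp_eq_compProd hg hW hY h).symm.trans h')
  rw [← Measure.map_map hg hW] at hκ
  rw [h]
  exact Measure.compProd_congr (ae_of_ae_map hg.aemeasurable hκ)

lemma identDistrib_prodMk_of_map_prodMk_eq_compProd [SFinite μ] {T : E → E}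
    (hT : Measurable T) (hW : Measurable W) (hY : Measurable Y) {η : Kernel E β}
    [IsSFiniteKernel η] (h : μ.map (fun ω ↦ (W ω, Y ω)) = μ.map W ⊗ₘ η)
    (hηT : ∀ x, η (T x) = η x) (hTW : IdentDistrib (fun ω ↦ T (W ω)) W μ μ) :
    IdentDistrib (fun ω ↦ (T (W ω), Y ω)) (fun ω ↦ (W ω, Y ω)) μ μ := by
  refine ⟨((hT.comp hW).prodMk hY).aemeasurable, (hW.prodMk hY).aemeasurable, ?_⟩
  have hηT' : η.comap T hT = η := Kernel.ext hηT
  rw [map_prodMk_comp_eq_compProd hT hW hY (hηT'.symm ▸ h), hTW.map_eq, h]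

variable [StandardBorelSpace Ω] [StandardBorelSpace β] [Nonempty β]

lemma map_prodMk_eq_compProd_comap_condDistrib {E₀ : Type*} {mE₀ : MeasurableSpace E₀}
    [StandardBorelSpace E₀] [Nonempty E₀] [IsFiniteMeasure μ] {U : Ω → γ} {V : Ω → E₀}
    (hU : Measurable U) (hV : Measurable V) (hY : Measurable Y) {φ : γ × E₀ → E} {g : E → γ}
    (hφ : Measurable φ) (hg : Measurable g) (hW : ∀ ω, φ (U ω, V ω) = W ω)
    (hgφ : ∀ x, g (φ x) = x.1) (h : V ⟂ᵢ[U, hU; μ] Y) :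
    μ.map (fun ω ↦ (W ω, Y ω)) = μ.map W ⊗ₘ (condDistrib Y U μ).comap g hg := by
  obtain rfl : W = fun ω ↦ φ (U ω, V ω) := funext fun ω ↦ (hW ω).symm
  refine map_prodMk_comp_eq_compProd hφ (hU.prodMk hV) hY ?_
  rw [← compProd_map_condDistrib hY.aemeasurable]
  refine Measure.compProd_congr ?_
  filter_upwards [(condIndepFun_iff_condDistrib_prod_ae_eq_prodMkRight hY hV hU).1 h] with x hx
  rw [hx, Kernel.prodMkRight_apply, Kernel.comap_apply, Kernel.comap_apply, hgφ]

end JointLaw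

end ProbabilityTheory

namespace Knockoff

section Blocks

variable {ι : Type*} {α : ι → Type*} {β : Type*}

def permBlocks (ς : ∀ i, Equiv.Perm (α i)) (z : ∀ i, α i → β) : ∀ i, α i → β :=
  fun i a ↦ z i (ς i a)

lemma measurable_permBlocks [MeasurableSpace β] (ς : ∀ i, Equiv.Perm (α i)) :
    Measurable (permBlocks (β := β) ς) := by
  unfold permBlocks
  fun_prop

variable {Ω γ : Type*} [MeasurableSpace Ω] [MeasurableSpace β] [MeasurableSpace γ]
  {Z : Ω → ∀ i, α i → β} {Y : Ω → γ}

def swapStabilizer (μ : Measure Ω) (hZ : Measurable Z) (hY : Measurable Y) :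
    Submonoid (∀ i, Equiv.Perm (α i)) where
  carrier := {ς | IdentDistrib (fun ω ↦ (permBlocks ς (Z ω), Y ω)) (fun ω ↦ (Z ω, Y ω)) μ μ}
  one_mem' := IdentDistrib.refl (hZ.prodMk hY).aemeasurable
  mul_mem' {_ τ} hς hτ := (hς.comp ((measurable_permBlocks τ).prodMap measurable_id)).trans hτ

end Blocks

section Coordinates

variable {ι β : Type*} {w : ι → ℕ}

def joinFirst (x : ι → β) (z : ∀ i, {ℓ : Fin (w i) // (ℓ : ℕ) ≠ 0} → β) :
    ∀ i, Fin (w i) → β :=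
  fun i ℓ ↦ if h : (ℓ : ℕ) = 0 then x i else z i ⟨ℓ, h⟩

lemma joinFirst_apply_zero (x : ι → β) (z : ∀ i, {ℓ : Fin (w i) // (ℓ : ℕ) ≠ 0} → β)
    (i : ι) (h : 0 < w i) : joinFirst x z i ⟨0, h⟩ = x i :=
  dif_pos rfl

lemma joinFirst_eq_self (hw : ∀ i, 0 < w i) (z : ∀ i, Fin (w i) → β) :
    joinFirst (fun i ↦ z i ⟨0, hw i⟩) (fun i ℓ ↦ z i ℓ) = z := by
  funext i ℓ
  by_cases h : (ℓ : ℕ) = 0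
  · obtain rfl : ℓ = ⟨0, hw i⟩ := Fin.ext h
    exact joinFirst_apply_zero _ _ i _
  · exact dif_neg h

lemma measurable_joinFirst [MeasurableSpace β] :
    Measurable fun q : (ι → β) × (∀ i, {ℓ : Fin (w i) // (ℓ : ℕ) ≠ 0} → β) ↦
      joinFirst q.1 q.2 := by
  refine measurable_pi_lambda _ fun i ↦ measurable_pi_lambda _ fun ℓ ↦ ?_
  by_cases h : (ℓ : ℕ) = 0
  · simp only [joinFirst, dif_pos h]
    fun_prop
  · simp only [joinFirst, dif_neg h]
    fun_prop

variable [DecidableEq ι]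

def insertCoord (j : ι) (u : {k // k ≠ j} → β) (x : β) : ι → β :=
  fun k ↦ if h : k = j then x else u ⟨k, h⟩

lemma insertCoord_apply_ne (j : ι) (u : {k // k ≠ j} → β) (x : β) (k : {k // k ≠ j}) :
    insertCoord j u x k = u k :=
  dif_neg k.2

lemma insertCoord_eq_self (j : ι) (y : ι → β) : insertCoord j (fun k ↦ y k) (y j) = y := by
  funext k
  by_cases h : k = j
  · subst h
    exact dif_pos rfl
  · exact dif_neg h

lemma measurable_insertCoord [MeasurableSpace β] (j : ι) :
    Measurable fun q : ({k // k ≠ j} → β) × β ↦ insertCoord j q.1 q.2 := by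
  refine measurable_pi_lambda _ fun k ↦ ?_
  by_cases h : k = j
  · simp only [insertCoord, dif_pos h]
    fun_prop
  · simp only [insertCoord, dif_neg h]
    fun_prop

end Coordinates

lemma mulSingle_mem_swapStabilizer_of_condIndepFun {Ω ι β γ : Type*} [Countable ι]
    [DecidableEq ι] {w : ι → ℕ} (hw : ∀ i, 0 < w i) [MeasurableSpace Ω] [StandardBorelSpace Ω]
    [MeasurableSpace β] [StandardBorelSpace β] [Nonempty β] [MeasurableSpace γ]
    [StandardBorelSpace γ] [Nonempty γ] {μ : Measure Ω} [IsFiniteMeasure μ] {X : ι → Ω → β}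
    {Y : Ω → γ} {Z : Ω → ∀ i, Fin (w i) → β} (hX : ∀ i, Measurable (X i))
    (hY : Measurable Y) (hZ : Measurable Z) (hZX : ∀ ω i, Z ω i ⟨0, hw i⟩ = X i ω)
    (hknock : (fun ω i (ℓ : {ℓ : Fin (w i) // (ℓ : ℕ) ≠ 0}) ↦ Z ω i ℓ)
      ⟂ᵢ[fun ω i ↦ X i ω, measurable_pi_lambda _ hX; μ] Y)
    {j : ι} (hnull : X j ⟂ᵢ[fun ω (k : {k // k ≠ j}) ↦ X k ω,
      measurable_pi_lambda _ fun k ↦ hX k; μ] Y)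
    (π : Equiv.Perm (Fin (w j)))
    (hswap : IdentDistrib (fun ω ↦ permBlocks (Pi.mulSingle j π) (Z ω)) Z μ μ) :
    Pi.mulSingle j π ∈ swapStabilizer μ hZ hY := by
  set first : (∀ i, Fin (w i) → β) → ι → β := fun z i ↦ z i ⟨0, hw i⟩
  have hfirst : Measurable first := by fun_prop
  have hrest : Measurable fun (x : ι → β) (k : {k // k ≠ j}) ↦ x k := by fun_prop
  have hfirstZ (ω : Ω) : first (Z ω) = fun i ↦ X i ω := funext (hZX ω)
  -- `Y` depends on `Z = joinFirst X Z̃` only through `X`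
  have hZlaw := map_prodMk_eq_compProd_comap_condDistrib (measurable_pi_lambda _ hX)
    (by fun_prop) hY measurable_joinFirst hfirst
    (fun ω ↦ by rw [← hfirstZ, joinFirst_eq_self]) (fun q ↦ funext (joinFirst_apply_zero _ _ · _))
    hknock
  -- `Y` depends on `X = insertCoord j X₋ⱼ Xⱼ` only through `X₋ⱼ`
  have hXlaw := map_prodMk_eq_compProd_comap_condDistrib (W := fun ω ↦ first (Z ω))
    (U := fun ω (k : {k // k ≠ j}) ↦ X k ω) (measurable_pi_lambda _ fun k ↦ hX k) (hX j) hY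
    (measurable_insertCoord j) hrest
    (fun ω ↦ (hfirstZ ω).symm ▸ insertCoord_eq_self j fun i ↦ X i ω)
    (fun q ↦ funext (insertCoord_apply_ne j _ _)) hnull
  refine identDistrib_prodMk_of_map_prodMk_eq_compProd (measurable_permBlocks _) hZ hY
    (map_prodMk_eq_compProd_comap_of_comp hfirst hZ hY hZlaw hXlaw) (fun z ↦ ?_) hswap
  simp only [Kernel.comap_apply]
  congr 1
  funext k
  simp [first, permBlocks, Pi.mulSingle_eq_of_ne k.2]

end Knockoff

/-- **Lemma 1 (exchangeability of irrelevant features and their knockoffs).**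
If `Z̃` is a valid `ω`-knockoff of `X` (swap-invariance of `Z` and conditional
independence of `Z̃` and `Y` given `X`), and `ς` is a tuple of permutations that
is the identity outside the null set `H₀` (those `j` with `X_j ⊥ Y` given
`(X_k)_{k ≠ j}`), then `(Z_swap(ς), Y)` and `(Z, Y)` are identically
distributed. -/
theorem exchangeability_of_nulls_and_knockoffs
    {Ω : Type*} [m0 : MeasurableSpace Ω] [StandardBorelSpace Ω]
    (μ : Measure Ω) [IsProbabilityMeasure μ]
    (p : ℕ) (w : Fin p → ℕ) (hw : ∀ j, 2 ≤ w j)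
    (X : Fin p → Ω → ℝ) (hX : ∀ j, Measurable (X j))
    (Y : Ω → ℝ) (hY : Measurable Y)
    (Z : Ω → (j : Fin p) → Fin (w j) → ℝ) (hZ : Measurable Z)
    -- the first coordinate of block j of Z is the original feature X j
    (hZfirst : ∀ ω₀ j, Z ω₀ j ⟨0, by have := hw j; omega⟩ = X j ω₀)
    -- valid ω-knockoff, property (1): swap-invariance of Z
    (hswap : ∀ ς : (j : Fin p) → Equiv.Perm (Fin (w j)),
      IdentDistrib (fun ω₀ => fun j ℓ => Z ω₀ j (ς j ℓ)) Z μ μ)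
    -- valid ω-knockoff, property (2): the knockoffs Z̃ (the coordinates ℓ ≠ 1 of Z)
    -- and Y are conditionally independent given X
    (hcondindep : CondIndepFun
      (MeasurableSpace.comap (fun ω₀ => fun j => X j ω₀) inferInstance)
      (Measurable.comap_le (measurable_pi_lambda _ fun j => hX j))
      (fun ω₀ => fun j => fun ℓ : {ℓ : Fin (w j) // (ℓ : ℕ) ≠ 0} => Z ω₀ j ℓ.1)
      Y μ)
    -- H₀ is the set of null indices
    (H0 : Finset (Fin p))
    (hH0 : ∀ j : Fin p, j ∈ H0 ↔ CondIndepFun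
      (MeasurableSpace.comap (fun ω₀ => fun k : {k : Fin p // k ≠ j} => X k ω₀)
        inferInstance)
      (Measurable.comap_le (measurable_pi_lambda _ fun k => hX k))
      (X j) Y μ) :
    ∀ ς : (j : Fin p) → Equiv.Perm (Fin (w j)), (∀ j ∉ H0, ς j = 1) →
      IdentDistrib (fun ω₀ => ((fun j ℓ => Z ω₀ j (ς j ℓ)), Y ω₀))
        (fun ω₀ => ((fun j ℓ => Z ω₀ j ℓ), Y ω₀)) μ μ := by
  intro ς hς
  have hw₀ : ∀ j, 0 < w j := fun j ↦ by have := hw j; omega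
  suffices ς ∈ Knockoff.swapStabilizer μ hZ hY from this
  refine Submonoid.pi_mem_of_mulSingle_mem ς fun j ↦ ?_
  by_cases hj : j ∈ H0
  · exact Knockoff.mulSingle_mem_swapStabilizer_of_condIndepFun hw₀ hX hY hZ hZfirst hcondindep
      ((hH0 j).1 hj) (ς j) (hswap _)
  · rw [hς j hj, Pi.mulSingle_one]
    exact one_mem _
end

section
/- Let (X_i)_{i ∈ I} be a finite family of random variables on a probability space, each taking values in a measurable space, such that for every i ∈ I, X_i is independent of the σ-algebra generated by the family (X_k)_{k ∈ I, k ≠ i}. Then the family (X_i)_{i ∈ I} is mutually independent. -/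
open MeasureTheory ProbabilityTheory

/-! Induction on the finite index set: if `j ∉ s`, the event `⋂ i ∈ s, f i` is measurable for the
σ-algebra generated by the `m k` with `k ≠ j`, so independence of `m j` from that σ-algebra splits
off the factor `μ (f j)`. -/

theorem ProbabilityTheory.iIndep_of_indep_biSup_ne {Ω ι : Type*} {_mΩ : MeasurableSpace Ω}
    {μ : Measure Ω} [IsProbabilityMeasure μ] {m : ι → MeasurableSpace Ω}
    (h : ∀ i, Indep (m i) (⨆ k ∈ ({k | k ≠ i} : Set ι), m k) μ) : iIndep m μ := by
  classical
  rw [iIndep_iff]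
  intro s f hf
  induction s using Finset.induction_on with
  | empty => simp
  | @insert j s hj ih =>
    have hf_rest : ∀ i ∈ s, MeasurableSet[m i] (f i) := fun i hi ↦ hf i (s.mem_insert_of_mem hi)
    have h_inter : MeasurableSet[⨆ k ∈ ({k | k ≠ j} : Set ι), m k] (⋂ i ∈ s, f i) :=
      .biInter s.countable_toSet fun i hi ↦
        le_biSup m (show i ≠ j from fun hij ↦ hj (hij ▸ hi)) _ (hf_rest i hi)
    rw [Finset.set_biInter_insert, Finset.prod_insert hj, ← ih hf_rest]
    exact (Indep_iff _ _ _).mp (h j) _ _ (hf j (s.mem_insert_self j)) h_inter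

theorem iIndepFun_of_indep_rest_general
    {Ω : Type*} [MeasurableSpace Ω] (μ : Measure Ω) [IsProbabilityMeasure μ]
    {ι : Type*} {β : ι → Type*} (mβ : ∀ i, MeasurableSpace (β i))
    (X : ∀ i, Ω → β i)
    (hindep : ∀ i, Indep (MeasurableSpace.comap (X i) (mβ i))
      (⨆ k ∈ ({k | k ≠ i} : Set ι), MeasurableSpace.comap (X k) (mβ k)) μ) :
    iIndepFun (m := mβ) X μ :=
  (iIndepFun_iff_iIndep _ _ _).mpr (iIndep_of_indep_biSup_ne hindep)

/-- **Each-versus-rest independence implies mutual independence.**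
If each random variable `X i` in a finite family is independent of the
σ-algebra generated by the rest of the family `(X k)_{k ≠ i}`, then the family
is mutually independent. -/
theorem iIndepFun_of_indep_rest
    {Ω : Type*} [MeasurableSpace Ω] (μ : Measure Ω) [IsProbabilityMeasure μ]
    {ι : Type*} [Fintype ι] {β : ι → Type*} (mβ : ∀ i, MeasurableSpace (β i))
    (X : ∀ i, Ω → β i) (hX : ∀ i, Measurable (X i))
    (hindep : ∀ i, Indep (MeasurableSpace.comap (X i) (mβ i))
      (⨆ k ∈ ({k | k ≠ i} : Set ι), MeasurableSpace.comap (X k) (mβ k)) μ) :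
    iIndepFun (m := mβ) X μ :=
  iIndepFun_of_indep_rest_general μ mβ X hindep
end
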